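/- arXiv:2005.04575 — 6 statements merged into one kernel-verified Lean document; each statement's English description precedes it below -/
import Mathlib

section
/- For all real x ≥ 0 and y > 0, the infimum over λ ≥ 0 of (e^{λy} - 1 - λy)/y² - λx equals -f(x,y), where f(x,y) = (xy(ln(xy+1) - 1) + ln(xy+1))/y², and the infimum is attained at λ* = ln(xy+1)/y. -/
open Real

/-- The optimized Legendre-type exponent in the Dzhaparidze-van Zanten bound. -/
noncomputable def f (x y : ℝ) : ℝ :=
  if y = 0 then x ^ 2 / 2
  else (x * y * (Real.log (x * y + 1) - 1) + Real.log (x * y + 1)) / y ^ 2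

theorem stmt_0 (x y : ℝ) (hx : 0 ≤ x) (hy : 0 < y) :
    IsLeast {v : ℝ | ∃ l : ℝ, 0 ≤ l ∧
        v = (Real.exp (l * y) - 1 - l * y) / y ^ 2 - l * x} (-(f x y)) ∧
      (Real.exp ((Real.log (x * y + 1) / y) * y) - 1 - (Real.log (x * y + 1) / y) * y) / y ^ 2
          - (Real.log (x * y + 1) / y) * x = -(f x y) := by
  have hy2 : (0:ℝ) < y ^ 2 := by positivity
  have hpos : (0:ℝ) < x * y + 1 := by nlinarith
  set L := Real.log (x * y + 1) with hLdef
  have hexp : Real.exp L = x * y + 1 := Real.exp_log hpos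
  have hL0 : 0 ≤ L := Real.log_nonneg (by nlinarith)
  have hdiv : L / y * y = L := div_mul_cancel₀ L hy.ne'
  have heq : (Real.exp ((L / y) * y) - 1 - (L / y) * y) / y ^ 2
      - (L / y) * x = -(f x y) := by
    rw [f, if_neg hy.ne', hdiv, hexp]
    field_simp
    ring
  refine ⟨⟨⟨L / y, by positivity, heq.symm⟩, ?_⟩, heq⟩
  rintro v ⟨l, hl, rfl⟩
  have key : (x * y + 1) * (l * y - L + 1) ≤ Real.exp (l * y) := by
    calc (x * y + 1) * (l * y - L + 1) = Real.exp L * ((l * y - L) + 1) := by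
          rw [hexp]
      _ ≤ Real.exp L * Real.exp (l * y - L) := by
          have := Real.add_one_le_exp (l * y - L)
          exact mul_le_mul_of_nonneg_left this (Real.exp_pos L).le
      _ = Real.exp (l * y) := by rw [← Real.exp_add, add_sub_cancel]
  rw [f, if_neg hy.ne']
  rw [← hLdef, ← sub_nonneg]
  have : (Real.exp (l * y) - 1 - l * y) / y ^ 2 - l * x -
      -((x * y * (L - 1) + L) / y ^ 2)
      = (Real.exp (l * y) - (x * y + 1) * (l * y - L + 1)) / y ^ 2 := by
    field_simp
    ring
  rw [this]
  have := sub_nonneg.mpr key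
  positivity
end

section
/- For all x ≥ 0 and y > 0, f(x,y) ≥ x² / (2(1 + xy/3)), where f(x,y) = (xy(ln(xy+1) - 1) + ln(xy+1))/y². -/
open Real

/-!
With `u = x y` one has `y² f(x, y) = (1 + u) log (1 + u) - u` (Bennett's function), so the claim is
Bernstein's bound `3u² / (2(u + 3)) ≤ (1 + u) log (1 + u) - u`. Both sides vanish at `u = 0`, so it
suffices to compare derivatives; this reduces to the Padé bound `2u / (u + 2) ≤ log (1 + u)`.
-/

open Set in
theorem monotoneOn_Ici_of_hasDerivAt_nonneg {g g' : ℝ → ℝ} {a : ℝ}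
    (hg : ∀ t ∈ Ici a, HasDerivAt g (g' t) t) (hg' : ∀ t ∈ Ioi a, 0 ≤ g' t) :
    MonotoneOn g (Ici a) := by
  refine monotoneOn_of_hasDerivWithinAt_nonneg (convex_Ici a)
    (fun t ht ↦ (hg t ht).continuousAt.continuousWithinAt) (fun t ht ↦ ?_) (by simpa using hg')
  rw [interior_Ici] at ht
  exact (hg t (mem_Ici_of_Ioi ht)).hasDerivWithinAt

theorem hasDerivAt_bennett_sub_bernstein {t : ℝ} (ht : 0 ≤ t) :
    HasDerivAt (fun u ↦ (1 + u) * log (1 + u) - u - 3 * u ^ 2 / (2 * (u + 3)))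
      (log (1 + t) - 3 * t * (t + 6) / (2 * (t + 3) ^ 2)) t := by
  have h1 : HasDerivAt (fun u : ℝ ↦ 1 + u) 1 t := (hasDerivAt_id t).const_add 1
  have hlog := h1.log (by positivity)
  have hquot := ((hasDerivAt_pow 2 t).const_mul 3).div
    (((hasDerivAt_id' t).add_const 3).const_mul 2) (by positivity : 2 * (t + 3) ≠ 0)
  refine (((h1.mul hlog).sub (hasDerivAt_id' t)).sub hquot).congr_deriv ?_
  field_simp
  ring

theorem bernstein_le_bennett {u : ℝ} (hu : 0 ≤ u) :
    3 * u ^ 2 / (2 * (u + 3)) ≤ (1 + u) * log (1 + u) - u := by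
  have hmono := monotoneOn_Ici_of_hasDerivAt_nonneg
    (fun t ht ↦ hasDerivAt_bennett_sub_bernstein ht) (fun t ht ↦ ?_)
  · have := hmono Set.self_mem_Ici hu hu
    norm_num at this
    linarith
  -- `4(t + 3)² - 3(t + 2)(t + 6) = t²`
  have ht : 0 < t := ht
  rw [sub_nonneg]
  calc 3 * t * (t + 6) / (2 * (t + 3) ^ 2) ≤ 2 * t / (t + 2) := by
        rw [div_le_div_iff₀ (by positivity) (by positivity)]
        nlinarith [pow_pos ht 3]
    _ ≤ log (1 + t) := le_log_one_add_of_nonneg ht.le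

theorem f_eq_of_ne_zero (x : ℝ) {y : ℝ} (hy : y ≠ 0) :
    f x y = ((1 + x * y) * log (1 + x * y) - x * y) / y ^ 2 := by
  rw [f, if_neg hy, add_comm (x * y) 1]
  ring

theorem stmt_2 (x y : ℝ) (hx : 0 ≤ x) (hy : 0 < y) :
    x ^ 2 / (2 * (1 + x * y / 3)) ≤ f x y := by
  have hxy : 0 ≤ x * y := mul_nonneg hx hy.le
  calc x ^ 2 / (2 * (1 + x * y / 3)) = 3 * (x * y) ^ 2 / (2 * (x * y + 3)) / y ^ 2 := by
        field_simp
        ring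
    _ ≤ ((1 + x * y) * log (1 + x * y) - x * y) / y ^ 2 := by
        gcongr
        exact bernstein_le_bennett hxy
    _ = f x y := (f_eq_of_ne_zero x hy.ne').symm
end

section
/- Let (ξ_i, 𝔉_i)_{i=1,...,n} be square-integrable martingale differences on a probability space, S_n = Σ_{i=1}^n ξ_i, and for y ≥ 0 let B_n(y) = Σ_{i=1}^n ξ_i² 1_{ξ_i > y} + Σ_{i=1}^n E[ξ_i² 1_{ξ_i ≤ y} | 𝔉_{i-1}]. Then for every λ, y ≥ 0, the process U_k(λ) = exp{λ S_k - ((e^{λy} - 1 - λy)/y²) B_k(y)} (with the y = 0 convention (e^{λy}-1-λy)/y² = λ²/2) is a supermartingale with E[U_n(λ)] ≤ 1. -/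
/-!
Write `φ t = (eᵗ - 1 - t) / t²` (with `φ 0 = 1/2`), so that `g = λ² φ(λy)`. The function `φ` is
increasing on `(0, ∞)` and `φ ≥ 1/2` on `[0, ∞)`, which gives the pointwise bound
`exp (λx - g x² 1{x > y}) ≤ 1 + λx + g x² 1{x ≤ y}` for every real `x`: for `x ≤ y` it reads
`φ(λx) (λx)² ≤ φ(λy) (λx)²`, and for `x > y` it follows from `t - t²/2 ≤ log (1 + t)`.
Conditioning on `𝔉_{k-1}` kills the linear term, so
`E[exp (λξ_k - g ξ_k² 1{ξ_k > y}) | 𝔉_{k-1}] ≤ 1 + g E[ξ_k² 1{ξ_k ≤ y} | 𝔉_{k-1}] ≤ exp (g E[…])`,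
which is the one-step supermartingale inequality for `U`. Finally `U_0 = 1`.
-/

open MeasureTheory Real Finset

noncomputable def expSubOneSubDivSq (t : ℝ) : ℝ :=
  if t = 0 then 1 / 2 else (exp t - 1 - t) / t ^ 2

lemma expSubOneSubDivSq_mul_sq (t : ℝ) : expSubOneSubDivSq t * t ^ 2 = exp t - 1 - t := by
  unfold expSubOneSubDivSq
  split_ifs with ht
  · simp [ht]
  · field_simp

lemma one_half_le_expSubOneSubDivSq {s : ℝ} (hs : 0 ≤ s) : 1 / 2 ≤ expSubOneSubDivSq s := by
  unfold expSubOneSubDivSq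
  split_ifs with h
  · rfl
  · rw [le_div_iff₀ (by positivity)]
    linarith [quadratic_le_exp_of_nonneg hs]

lemma exp_le_quadratic_of_nonpos {t : ℝ} (ht : t ≤ 0) : exp t ≤ 1 + t + t ^ 2 / 2 := by
  have hpos : 0 < 1 + -t + (-t) ^ 2 / 2 := by nlinarith
  have h := quadratic_le_exp_of_nonneg (neg_nonneg.2 ht)
  rw [exp_neg, le_inv_comm₀ hpos (exp_pos t)] at h
  refine h.trans ?_
  -- `(1 - t + t²/2) (1 + t + t²/2) = 1 + t⁴/4`
  rw [inv_le_iff_one_le_mul₀ hpos]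
  nlinarith [sq_nonneg (t ^ 2)]

lemma two_sub_mul_exp_le_two_add {t : ℝ} (ht : 0 ≤ t) : (2 - t) * exp t ≤ 2 + t := by
  rcases le_or_gt 2 t with h2 | h2
  · nlinarith [exp_pos t]
  · have := exp_le_two_add_div_two_sub ht h2
    rwa [le_div_iff₀ (by linarith), mul_comm] at this

lemma expSubOneSubDivSq_monotoneOn : MonotoneOn expSubOneSubDivSq (Set.Ioi 0) := by
  have heq : Set.EqOn expSubOneSubDivSq (fun t => (exp t - 1 - t) / t ^ 2) (Set.Ioi 0) :=
    fun t ht => if_neg (ne_of_gt ht)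
  refine (monotoneOn_of_hasDerivWithinAt_nonneg
    (f' := fun t => ((t - 2) * exp t + t + 2) / t ^ 3)
    (convex_Ioi 0) ?_ (fun t ht => ?_) (fun t ht => ?_)).congr heq.symm
  · exact ContinuousOn.div (by fun_prop) (by fun_prop) fun t ht => pow_ne_zero 2 (ne_of_gt ht)
  · rw [interior_Ioi] at ht
    have ht0 : t ≠ 0 := ne_of_gt ht
    have := (((hasDerivAt_exp t).sub_const 1).sub (hasDerivAt_id' t)).div
      (hasDerivAt_pow 2 t) (pow_ne_zero 2 ht0)
    refine (this.congr_deriv ?_).hasDerivWithinAt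
    simp only [Pi.sub_apply]
    field_simp
    ring
  · rw [interior_Ioi] at ht
    have := two_sub_mul_exp_le_two_add (le_of_lt ht)
    exact div_nonneg (by linarith) (pow_nonneg (le_of_lt ht) 3)

lemma exp_le_one_add_add_expSubOneSubDivSq_mul_sq {t s : ℝ} (hts : t ≤ s) (hs : 0 ≤ s) :
    exp t ≤ 1 + t + expSubOneSubDivSq s * t ^ 2 := by
  rcases le_or_gt t 0 with ht | ht
  · have := one_half_le_expSubOneSubDivSq hs
    nlinarith [exp_le_quadratic_of_nonpos ht, sq_nonneg t]
  · have := expSubOneSubDivSq_monotoneOn ht (ht.trans_le hts) hts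
    have := expSubOneSubDivSq_mul_sq t
    nlinarith [sq_nonneg t]

lemma exp_sub_mul_sq_le_one_add {t c : ℝ} (ht : 0 ≤ t) (hc : 1 / 2 ≤ c) :
    exp (t - c * t ^ 2) ≤ 1 + t := by
  rw [← exp_log (by positivity : 0 < 1 + t), exp_le_exp]
  have := le_log_one_add_of_nonneg ht
  have : t - t ^ 2 / 2 ≤ 2 * t / (t + 2) := by
    rw [le_div_iff₀ (by positivity)]
    nlinarith [pow_nonneg ht 3]
  nlinarith [sq_nonneg t]

lemma sq_mul_expSubOneSubDivSq_mul (lam y : ℝ) : lam ^ 2 * expSubOneSubDivSq (lam * y) =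
    if y = 0 then lam ^ 2 / 2 else (exp (lam * y) - 1 - lam * y) / y ^ 2 := by
  split_ifs with hy
  · simp [expSubOneSubDivSq, hy, div_eq_mul_inv]
  · rw [eq_div_iff (pow_ne_zero 2 hy), ← expSubOneSubDivSq_mul_sq]
    ring

section Truncation

variable {lam y : ℝ}

lemma exp_mul_sub_le_one_add (hlam : 0 ≤ lam) (hy : 0 ≤ y) (x : ℝ) :
    exp (lam * x - lam ^ 2 * expSubOneSubDivSq (lam * y) * (if y < x then x ^ 2 else 0))
      ≤ 1 + lam * x + lam ^ 2 * expSubOneSubDivSq (lam * y) * (if x ≤ y then x ^ 2 else 0) := by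
  have hs : 0 ≤ lam * y := mul_nonneg hlam hy
  rcases le_or_gt x y with hxy | hxy
  · simp only [if_neg hxy.not_gt, if_pos hxy, mul_zero, sub_zero]
    have := exp_le_one_add_add_expSubOneSubDivSq_mul_sq (mul_le_mul_of_nonneg_left hxy hlam) hs
    linarith
  · simp only [if_pos hxy, if_neg hxy.not_ge, mul_zero, add_zero]
    have := exp_sub_mul_sq_le_one_add (mul_nonneg hlam (hy.trans hxy.le))
      (one_half_le_expSubOneSubDivSq hs)
    rwa [mul_pow, ← mul_assoc, mul_comm _ (lam ^ 2)] at this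

lemma mul_sub_le_mul_add_half (hlam : 0 ≤ lam) (hy : 0 ≤ y) (x : ℝ) :
    lam * x - lam ^ 2 * expSubOneSubDivSq (lam * y) * (if y < x then x ^ 2 else 0)
      ≤ lam * y + 1 / 2 := by
  rcases le_or_gt x y with hxy | hxy
  · simp only [if_neg hxy.not_gt, mul_zero, sub_zero]
    nlinarith
  · simp only [if_pos hxy]
    have := one_half_le_expSubOneSubDivSq (mul_nonneg hlam hy)
    nlinarith [sq_nonneg (lam * x - 1), sq_nonneg (lam * x), mul_nonneg hlam hy]

end Truncation

section Supermartingale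

variable {Ω : Type*} {m m0 : MeasurableSpace Ω} {μ : Measure Ω}

lemma measurable_mul_sub_mul_ite {X : Ω → ℝ} (hX : Measurable X)
    (a c y : ℝ) : Measurable fun ω => a * X ω - c * (if y < X ω then X ω ^ 2 else 0) :=
  (measurable_const.mul hX).sub (measurable_const.mul
    (Measurable.ite (measurableSet_lt measurable_const hX) (hX.pow_const 2) measurable_const))

lemma integrable_exp_of_le [IsFiniteMeasure μ] {f : Ω → ℝ} {D : ℝ}
    (hf : AEStronglyMeasurable f μ) (hfD : ∀ ω, f ω ≤ D) : Integrable (fun ω => exp (f ω)) μ :=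
  (integrable_const (exp D)).mono' (continuous_exp.comp_aestronglyMeasurable hf)
    (ae_of_all _ fun ω => by rw [norm_of_nonneg (exp_pos _).le, exp_le_exp]; exact hfD ω)

lemma condExp_le_exp_of_le_one_add (hm : m ≤ m0) [IsFiniteMeasure μ]
    {W X ν : Ω → ℝ} {a b : ℝ} (hW : Integrable W μ) (hX : Integrable X μ) (hν : Integrable ν μ)
    (hX0 : μ[X | m] =ᵐ[μ] 0) (hle : ∀ ω, W ω ≤ 1 + a * X ω + b * ν ω) :
    μ[W | m] ≤ᵐ[μ] fun ω => exp (b * μ[ν | m] ω) := by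
  have hL : Integrable ((fun _ => (1 : ℝ)) + a • X + b • ν) μ :=
    ((integrable_const 1).add (hX.smul a)).add (hν.smul b)
  have hcond : μ[(fun _ => (1 : ℝ)) + a • X + b • ν | m] =ᵐ[μ] fun ω => 1 + b * μ[ν | m] ω := by
    filter_upwards [condExp_add ((integrable_const 1).add (hX.smul a)) (hν.smul b) m,
      condExp_add (integrable_const 1) (hX.smul a) m, condExp_smul a X m, condExp_smul b ν m, hX0]
      with ω h1 h2 h3 h4 h5
    simp [h1, h2, h3, h4, h5, condExp_const hm]
  filter_upwards [condExp_mono hW hL (ae_of_all _ hle), hcond] with ω h1 h2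
  exact (h1.trans h2.le).trans (by linarith [add_one_le_exp (b * μ[ν | m] ω)])

lemma condExp_exp_mul_sub_le [IsFiniteMeasure μ] (hm : m ≤ m0)
    {lam y : ℝ} (hlam : 0 ≤ lam) (hy : 0 ≤ y) {X : Ω → ℝ} (hX : Measurable X)
    (hX2 : Integrable (fun ω => X ω ^ 2) μ) (hX0 : μ[X | m] =ᵐ[μ] 0) :
    μ[fun ω => exp (lam * X ω
        - lam ^ 2 * expSubOneSubDivSq (lam * y) * (if y < X ω then X ω ^ 2 else 0)) | m]
      ≤ᵐ[μ] fun ω => exp (lam ^ 2 * expSubOneSubDivSq (lam * y)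
        * μ[fun ω => if X ω ≤ y then X ω ^ 2 else 0 | m] ω) := by
  have hXint : Integrable X μ :=
    ((memLp_two_iff_integrable_sq hX.aestronglyMeasurable).2 hX2).integrable one_le_two
  have hνint : Integrable (fun ω => if X ω ≤ y then X ω ^ 2 else 0) μ :=
    hX2.mono' (Measurable.ite (measurableSet_le hX measurable_const) (hX.pow_const 2)
      measurable_const).aestronglyMeasurable
      (ae_of_all _ fun ω => by split_ifs <;> simp [sq_nonneg])
  exact condExp_le_exp_of_le_one_add hm
    (integrable_exp_of_le (measurable_mul_sub_mul_ite hX _ _ _).aestronglyMeasurable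
      fun ω => mul_sub_le_mul_add_half hlam hy _)
    hXint hνint hX0 fun ω => exp_mul_sub_le_one_add hlam hy _

theorem supermartingale_exp_sum_sub [IsFiniteMeasure μ] {ℱ : Filtration ℕ m0}
    {Z C : ℕ → Ω → ℝ} {D : ℝ}
    (hZ : ∀ i, StronglyMeasurable[ℱ i] (Z i)) (hZD : ∀ i ω, Z i ω ≤ D)
    (hC : ∀ i, StronglyMeasurable[ℱ (i - 1)] (C i)) (hC0 : ∀ i, 0 ≤ᵐ[μ] C i)
    (hstep : ∀ k, μ[fun ω => exp (Z (k + 1) ω) | ℱ k] ≤ᵐ[μ] fun ω => exp (C (k + 1) ω)) :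
    Supermartingale (fun k ω => exp (∑ i ∈ Icc 1 k, (Z i ω - C i ω))) ℱ μ := by
  set U : ℕ → Ω → ℝ := fun k ω => exp (∑ i ∈ Icc 1 k, (Z i ω - C i ω)) with hU
  have hadapt : StronglyAdapted ℱ U := fun k =>
    (Finset.measurable_sum _ fun i hi =>
      (((hZ i).mono (ℱ.mono (mem_Icc.1 hi).2)).measurable.sub
        ((hC i).mono (ℱ.mono ((Nat.sub_le i 1).trans (mem_Icc.1 hi).2))).measurable)).exp
      |>.stronglyMeasurable
  have hint : ∀ k, Integrable (U k) μ := by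
    intro k
    refine (integrable_const (exp (k * D))).mono'
      ((hadapt k).mono (ℱ.le k)).aestronglyMeasurable ?_
    filter_upwards [ae_all_iff.2 hC0] with ω hω
    rw [norm_of_nonneg (exp_pos _).le, exp_le_exp]
    calc ∑ i ∈ Icc 1 k, (Z i ω - C i ω) ≤ ∑ _i ∈ Icc 1 k, D :=
          sum_le_sum fun i _ => by linarith [hZD i ω, show (0 : ℝ) ≤ C i ω from hω i]
      _ = k * D := by simp
  have hfactor : ∀ k, U (k + 1) =
      (fun ω => U k ω * exp (-C (k + 1) ω)) * fun ω => exp (Z (k + 1) ω) := by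
    intro k
    funext ω
    simp only [hU, Pi.mul_apply, ← exp_add, sum_Icc_succ_top (Nat.le_add_left 1 k)]
    ring_nf
  refine supermartingale_nat hadapt hint fun k => ?_
  have hF : StronglyMeasurable[ℱ k] fun ω => U k ω * exp (-C (k + 1) ω) :=
    (hadapt k).mul (hC (k + 1)).measurable.neg.exp.stronglyMeasurable
  rw [hfactor]
  filter_upwards [condExp_mul_of_stronglyMeasurable_left hF (hfactor k ▸ hint (k + 1))
      (integrable_exp_of_le ((hZ (k + 1)).mono (ℱ.le _)).aestronglyMeasurable (hZD _)),
    hstep k] with ω h1 h2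
  rw [h1, Pi.mul_apply]
  calc U k ω * exp (-C (k + 1) ω) * μ[fun ω => exp (Z (k + 1) ω) | ℱ k] ω
      ≤ U k ω * exp (-C (k + 1) ω) * exp (C (k + 1) ω) :=
        mul_le_mul_of_nonneg_left h2 (by positivity)
    _ = U k ω := by rw [mul_assoc, ← exp_add, neg_add_cancel, exp_zero, mul_one]

end Supermartingale

theorem stmt_4 {Ω : Type*} {m : MeasurableSpace Ω} {μ : Measure Ω} [IsProbabilityMeasure μ]
    (ℱ : Filtration ℕ m)
    (ξ : ℕ → Ω → ℝ)
    (hadp : ∀ i, StronglyMeasurable[ℱ i] (ξ i))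
    (hsq : ∀ i, Integrable (fun ω => (ξ i ω) ^ 2) μ)
    (hmart : ∀ i : ℕ, 1 ≤ i → μ[ξ i | ℱ (i - 1)] =ᵐ[μ] 0)
    (n : ℕ) (lam y : ℝ) (hlam : 0 ≤ lam) (hy : 0 ≤ y)
    (g : ℝ) (hg : g = if y = 0 then lam ^ 2 / 2 else (Real.exp (lam * y) - 1 - lam * y) / y ^ 2)
    (S B : ℕ → Ω → ℝ)
    (hS : S = fun k ω => ∑ i ∈ Finset.Icc 1 k, ξ i ω)
    (hB : B = fun k ω =>
      (∑ i ∈ Finset.Icc 1 k, if y < ξ i ω then (ξ i ω) ^ 2 else 0)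
        + ∑ i ∈ Finset.Icc 1 k,
            (μ[fun ω' => if ξ i ω' ≤ y then (ξ i ω') ^ 2 else 0 | ℱ (i - 1)]) ω)
    (U : ℕ → Ω → ℝ)
    (hU : U = fun k ω => Real.exp (lam * S k ω - g * B k ω)) :
    Supermartingale U ℱ μ ∧ ∫ ω, U n ω ∂μ ≤ 1 := by
  rw [← sq_mul_expSubOneSubDivSq_mul] at hg
  subst hg hS hB
  set g := lam ^ 2 * expSubOneSubDivSq (lam * y)
  have hg0 : 0 ≤ g := mul_nonneg (sq_nonneg lam)
    ((one_half_pos (α := ℝ)).le.trans (one_half_le_expSubOneSubDivSq (mul_nonneg hlam hy)))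
  set Z : ℕ → Ω → ℝ := fun i ω => lam * ξ i ω - g * (if y < ξ i ω then ξ i ω ^ 2 else 0)
  set C : ℕ → Ω → ℝ := fun i ω =>
    g * μ[fun ω' => if ξ i ω' ≤ y then ξ i ω' ^ 2 else 0 | ℱ (i - 1)] ω
  have hUeq : U = fun k ω => exp (∑ i ∈ Icc 1 k, (Z i ω - C i ω)) := by
    rw [hU]
    funext k ω
    simp only [Z, C, sum_sub_distrib, mul_sum, mul_add]
    ring_nf
  have hsup : Supermartingale U ℱ μ := hUeq ▸ supermartingale_exp_sum_sub (D := lam * y + 1 / 2)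
    (fun i => (measurable_mul_sub_mul_ite (hadp i).measurable _ _ _).stronglyMeasurable)
    (fun i ω => mul_sub_le_mul_add_half hlam hy (ξ i ω))
    (fun i => stronglyMeasurable_condExp.const_mul g)
    (fun i => (condExp_nonneg (ae_of_all μ fun ω => ite_nonneg (sq_nonneg (ξ i ω)) le_rfl)).mono
      fun ω hω => mul_nonneg hg0 hω)
    (fun k => condExp_exp_mul_sub_le (ℱ.le k) hlam hy ((hadp _).mono (ℱ.le _)).measurable
      (hsq _) (hmart (k + 1) (Nat.le_add_left 1 k)))
  have hU0 : U 0 = fun _ => 1 := by simp [hUeq]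
  refine ⟨hsup, ?_⟩
  simpa [hU0] using hsup.setIntegral_le (Nat.zero_le n) MeasurableSet.univ
end

section
/- Let (ξ_i, 𝔉_i) be square-integrable martingale differences, S_n = Σ ξ_i, and B_n(y) = Σ ξ_i² 1_{ξ_i > y} + Σ E[ξ_i² 1_{ξ_i ≤ y} | 𝔉_{i-1}]. Then for all x, y ≥ 0 and every p > 1, P(S_n ≥ x B_n(y)) ≤ (E[exp{-(p-1) f(x,y) B_n(y)} 1_{S_n ≥ x B_n(y)}])^{1/p}, where f(x,y) = (xy(ln(xy+1) - 1) + ln(xy+1))/y² with f(x,0) = x²/2. -/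
/-
With `λ = log (1 + x y) / y` and `H = (e^{λ y} - 1 - λ y) / y²` (`λ = x`, `H = x² / 2`
when `y = 0`) one has `f x y = λ x - H`. Since `(e^t - 1 - t) / t²` is increasing,
`H ≥ λ² / 2` and `e^{t - t²/2} ≤ 1 + t` for `t ≥ 0`, every real `u` satisfies
  `exp (λ u - H u² 1{u > y}) ≤ 1 + λ u + H u² 1{u ≤ y}`.
Taking conditional expectations, with `C_i = E[ξ_i² 1{ξ_i ≤ y} | 𝔉_{i-1}]`,
  `E[exp (λ ξ_i - H ξ_i² 1{ξ_i > y} - H C_i) | 𝔉_{i-1}] ≤ e^{-H C_i} (1 + H C_i) ≤ 1`,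
so `exp (λ S_n - H B_n(y))` has expectation at most `1`. On `A = {S_n ≥ x B_n(y)}` the exponent
dominates `f x y * B_n(y)`, and Hölder's inequality with exponents `p` and `p / (p - 1)` applied to
`1_A = e^{-(p-1) f B / p} e^{(p-1) f B / p}` gives the bound.
-/

open MeasureTheory Real Finset

lemma exp_sub_sq_div_two_le_one_add {t : ℝ} (ht : 0 ≤ t) : exp (t - t ^ 2 / 2) ≤ 1 + t := by
  have hmono : Monotone fun s => (1 + s) * exp (s ^ 2 / 2 - s) := by
    refine monotone_of_hasDerivAt_nonneg (f' := fun s => s ^ 2 * exp (s ^ 2 / 2 - s))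
      (fun s => ?_) (fun s => by positivity)
    exact (((hasDerivAt_id' s).const_add 1).mul
      ((((hasDerivAt_pow 2 s).div_const 2).sub (hasDerivAt_id' s)).exp)).congr_deriv
      (by simp only [Pi.sub_apply]; ring)
  have h : 1 ≤ (1 + t) * exp (t ^ 2 / 2 - t) := by simpa using hmono ht
  calc exp (t - t ^ 2 / 2) = exp (t - t ^ 2 / 2) * 1 := (mul_one _).symm
    _ ≤ exp (t - t ^ 2 / 2) * ((1 + t) * exp (t ^ 2 / 2 - t)) := by gcongr
    _ = 1 + t := by rw [mul_left_comm, ← exp_add]; simp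

lemma monotone_sub_two_mul_exp_add_add_two : Monotone fun t => (t - 2) * exp t + t + 2 := by
  refine monotone_of_hasDerivAt_nonneg (f' := fun t => (t - 1) * exp t + 1) (fun t => ?_)
    (fun t => ?_)
  · exact ((((hasDerivAt_id' t).sub_const 2).mul (hasDerivAt_exp t)).add
      (hasDerivAt_id' t)).add_const 2 |>.congr_deriv (by ring)
  · -- `1 - t ≤ exp (-t)`, multiplied by `exp t`
    have h := mul_le_mul_of_nonneg_right (add_one_le_exp (-t)) (exp_pos t).le
    rw [← exp_add, neg_add_cancel, exp_zero] at h
    simp only [Pi.zero_apply]; nlinarith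

lemma monotoneOn_exp_sub_sub_div_sq :
    MonotoneOn (fun t => (exp t - 1 - t) / t ^ 2) (Set.Ioi 0) := by
  refine monotoneOn_of_hasDerivWithinAt_nonneg (convex_Ioi 0)
    (f' := fun t => ((t - 2) * exp t + t + 2) / t ^ 3) ?_ (fun t ht => ?_) (fun t ht => ?_)
  · exact ContinuousOn.div (by fun_prop) (by fun_prop) fun t ht => pow_ne_zero 2 (ne_of_gt ht)
  · have ht0 : t ≠ 0 := (interior_Ioi.subset ht).ne'
    refine HasDerivAt.hasDerivWithinAt ?_
    exact ((((hasDerivAt_exp t).sub_const 1).sub (hasDerivAt_id' t)).div (hasDerivAt_pow 2 t)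
      (pow_ne_zero 2 ht0)).congr_deriv (by simp only [Pi.sub_apply]; field_simp; ring)
  · rw [interior_Ioi] at ht
    have := monotone_sub_two_mul_exp_add_add_two ht.le
    simp only [zero_sub, exp_zero, mul_one, add_zero, neg_add_cancel] at this
    exact div_nonneg this (pow_nonneg ht.le 3)

lemma exp_mul_le_of_le {L H y u : ℝ} (hL : 0 ≤ L) (hH : L ^ 2 / 2 ≤ H)
    (hHy : exp (L * y) - 1 - L * y ≤ H * y ^ 2) (hu : u ≤ y) :
    exp (L * u) ≤ 1 + L * u + H * u ^ 2 := by
  rcases le_or_gt (L * u) 0 with hLu | hLu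
  · nlinarith [exp_le_quadratic_of_nonpos hLu, mul_le_mul_of_nonneg_right hH (sq_nonneg u)]
  have hLuy : L * u ≤ L * y := mul_le_mul_of_nonneg_left hu hL
  have hLy : 0 < L * y := hLu.trans_le hLuy
  have hL0 : L ≠ 0 := left_ne_zero_of_mul hLy.ne'
  have hy0 : y ≠ 0 := right_ne_zero_of_mul hLy.ne'
  have key : exp (L * u) - 1 - L * u ≤ H * u ^ 2 := calc
    exp (L * u) - 1 - L * u = (exp (L * u) - 1 - L * u) / (L * u) ^ 2 * (L * u) ^ 2 :=
      (div_mul_cancel₀ _ (pow_ne_zero 2 hLu.ne')).symm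
    _ ≤ (exp (L * y) - 1 - L * y) / (L * y) ^ 2 * (L * u) ^ 2 := by
      gcongr ?_ * _; exact monotoneOn_exp_sub_sub_div_sq hLu hLy hLuy
    _ ≤ H * y ^ 2 / (L * y) ^ 2 * (L * u) ^ 2 := by gcongr
    _ = H * u ^ 2 := by field_simp
  linarith

lemma exp_mul_sub_le_of_nonneg {L H u : ℝ} (hL : 0 ≤ L) (hH : L ^ 2 / 2 ≤ H) (hu : 0 ≤ u) :
    exp (L * u - H * u ^ 2) ≤ 1 + L * u :=
  (exp_le_exp.2 (by nlinarith [mul_le_mul_of_nonneg_right hH (sq_nonneg u)])).trans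
    (exp_sub_sq_div_two_le_one_add (mul_nonneg hL hu))

lemma exp_tilt_le {L H y : ℝ} (hL : 0 ≤ L) (hy : 0 ≤ y) (hH : L ^ 2 / 2 ≤ H)
    (hHy : exp (L * y) - 1 - L * y ≤ H * y ^ 2) (u : ℝ) :
    exp (L * u - H * (if y < u then u ^ 2 else 0)) ≤
      1 + L * u + H * (if u ≤ y then u ^ 2 else 0) := by
  by_cases hu : u ≤ y
  · simpa [hu, not_lt.2 hu] using exp_mul_le_of_le hL hH hHy hu
  · simpa [hu, not_le.1 hu] using exp_mul_sub_le_of_nonneg hL hH (hy.trans (not_le.1 hu).le)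

lemma exists_tilt_f_eq {x y : ℝ} (hx : 0 ≤ x) (hy : 0 ≤ y) :
    ∃ L H, 0 ≤ L ∧ L ^ 2 / 2 ≤ H ∧ exp (L * y) - 1 - L * y ≤ H * y ^ 2 ∧
      f x y = L * x - H := by
  rcases hy.eq_or_lt with rfl | hy
  · exact ⟨x, x ^ 2 / 2, hx, le_rfl, by simp, by rw [f, if_pos rfl]; ring⟩
  -- `L = c / y` maximises `L * x - (exp (L * y) - 1 - L * y) / y ^ 2`
  set c := log (x * y + 1) with hc
  have hxy : 0 < x * y + 1 := by positivity
  have hc0 : 0 ≤ c := log_nonneg (by nlinarith [mul_nonneg hx hy.le])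
  have hexp : exp (c / y * y) = x * y + 1 := by rw [div_mul_cancel₀ _ hy.ne', exp_log hxy]
  refine ⟨c / y, (x * y - c) / y ^ 2, div_nonneg hc0 hy.le, ?_, ?_, ?_⟩
  · rw [div_pow, div_div, div_le_div_iff₀ (by positivity) (by positivity)]
    nlinarith [quadratic_le_exp_of_nonneg hc0, exp_log hxy]
  · rw [hexp, div_mul_cancel₀ _ hy.ne', div_mul_cancel₀ _ (by positivity)]; linarith
  · rw [f, if_neg hy.ne']; field_simp; ring

lemma f_nonneg {x y : ℝ} (hx : 0 ≤ x) (hy : 0 ≤ y) : 0 ≤ f x y := by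
  rcases hy.eq_or_lt with rfl | hy
  · rw [f, if_pos rfl]; positivity
  have hxy : 0 < x * y + 1 := by positivity
  have hlog := mul_le_mul_of_nonneg_left (one_sub_inv_le_log_of_pos hxy) hxy.le
  rw [mul_sub, mul_one, mul_inv_cancel₀ hxy.ne'] at hlog
  rw [f, if_neg hy.ne']
  exact div_nonneg (by nlinarith) (by positivity)

section
variable {Ω : Type*} {m' m : MeasurableSpace Ω} {μ : Measure Ω} [IsFiniteMeasure μ]

lemma lintegral_mul_ofReal_le_of_condExp_le_one (hm : m' ≤ m) {φ : Ω → ENNReal}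
    (hφ : Measurable[m'] φ) {G : Ω → ℝ} (hG0 : 0 ≤ᵐ[μ] G) (hG : Integrable G μ)
    (hcond : μ[G|m'] ≤ᵐ[μ] 1) :
    ∫⁻ ω, φ ω * ENNReal.ofReal (G ω) ∂μ ≤ ∫⁻ ω, φ ω ∂μ := by
  have hle : (μ.withDensity fun ω => ENNReal.ofReal (G ω)).trim hm ≤ μ.trim hm := by
    refine Measure.le_iff.2 fun s hs => ?_
    rw [trim_measurableSet_eq hm hs, trim_measurableSet_eq hm hs,
      withDensity_apply _ (hm s hs),
      ← ofReal_integral_eq_lintegral_ofReal hG.integrableOn (ae_restrict_of_ae hG0),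
      ← setIntegral_condExp hm hG hs]
    calc ENNReal.ofReal (∫ ω in s, μ[G|m'] ω ∂μ)
        ≤ ENNReal.ofReal (∫ ω in s, (1 : ℝ) ∂μ) :=
          ENNReal.ofReal_le_ofReal (setIntegral_mono_ae integrable_condExp.integrableOn
            (integrable_const _).integrableOn hcond)
      _ = μ s := by simp [measureReal_def]
  calc ∫⁻ ω, φ ω * ENNReal.ofReal (G ω) ∂μ
      = ∫⁻ ω, φ ω ∂μ.withDensity fun ω => ENNReal.ofReal (G ω) := by
        rw [lintegral_withDensity_eq_lintegral_mul₀ hG.aemeasurable.ennreal_ofReal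
          (hφ.mono hm le_rfl).aemeasurable]
        simp only [Pi.mul_apply, mul_comm]
    _ = ∫⁻ ω, φ ω ∂(μ.withDensity fun ω => ENNReal.ofReal (G ω)).trim hm :=
      (lintegral_trim hm hφ).symm
    _ ≤ ∫⁻ ω, φ ω ∂μ.trim hm := lintegral_mono' hle le_rfl
    _ = ∫⁻ ω, φ ω ∂μ := lintegral_trim hm hφ

end

section
variable {Ω : Type*} {m' m : MeasurableSpace Ω} {μ : Measure Ω} [IsFiniteMeasure μ]
  {ξ τ κ : Ω → ℝ} {L H : ℝ}

lemma integrable_exp_tilt (hH : 0 ≤ H) (hξ : Integrable ξ μ) (hτ : AEStronglyMeasurable τ μ)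
    (hκ : Integrable κ μ) {C : Ω → ℝ} (hC : AEStronglyMeasurable C μ) (hC0 : 0 ≤ᵐ[μ] C)
    (hbound : ∀ ω, exp (L * ξ ω - H * τ ω) ≤ 1 + L * ξ ω + H * κ ω) :
    Integrable (fun ω => exp (L * ξ ω - H * τ ω - H * C ω)) μ := by
  refine (((integrable_const 1).add (hξ.const_mul L)).add (hκ.const_mul H)).mono'
    (by fun_prop) ?_
  filter_upwards [hC0] with ω hω
  rw [norm_of_nonneg (exp_pos _).le]
  exact (exp_le_exp.2 (by nlinarith [mul_nonneg hH hω])).trans (hbound ω)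

lemma condExp_one_add_mul_add_mul (hm : m' ≤ m) (hξ : Integrable ξ μ) (hξ0 : μ[ξ|m'] =ᵐ[μ] 0)
    (hκ : Integrable κ μ) :
    μ[fun ω => 1 + L * ξ ω + H * κ ω|m'] =ᵐ[μ] fun ω => 1 + H * μ[κ|m'] ω := by
  have h : (fun ω => 1 + L * ξ ω + H * κ ω) = (fun _ => (1 : ℝ)) + L • ξ + H • κ := rfl
  rw [h]
  filter_upwards [condExp_add ((integrable_const 1).add (hξ.smul L)) (hκ.smul H) m',
    condExp_add (integrable_const 1) (hξ.smul L) m', condExp_smul L ξ m', condExp_smul H κ m',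
    hξ0] with ω h1 h2 h3 h4 h5
  simp [h1, h2, h3, h4, h5, condExp_const hm]

lemma condExp_exp_tilt_le_one (hm : m' ≤ m) (hH : 0 ≤ H) (hξ : Integrable ξ μ)
    (hξ0 : μ[ξ|m'] =ᵐ[μ] 0) (hτ : AEStronglyMeasurable τ μ) (hκ : Integrable κ μ)
    (hκ0 : 0 ≤ᵐ[μ] κ) (hbound : ∀ ω, exp (L * ξ ω - H * τ ω) ≤ 1 + L * ξ ω + H * κ ω) :
    μ[fun ω => exp (L * ξ ω - H * τ ω - H * μ[κ|m'] ω)|m'] ≤ᵐ[μ] 1 := by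
  set C := μ[κ|m']
  have hC0 : 0 ≤ᵐ[μ] C := condExp_nonneg hκ0
  have hCm : StronglyMeasurable[m'] C := stronglyMeasurable_condExp
  have hD : Integrable (fun ω => exp (L * ξ ω - H * τ ω)) μ := by
    simpa using integrable_exp_tilt hH hξ hτ hκ (C := 0) aestronglyMeasurable_const
      (ae_of_all _ fun _ => le_rfl) hbound
  have hDcond : μ[fun ω => exp (L * ξ ω - H * τ ω)|m'] ≤ᵐ[μ] fun ω => 1 + H * C ω :=
    (condExp_mono hD (((integrable_const 1).add (hξ.const_mul L)).add (hκ.const_mul H))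
      (ae_of_all _ hbound)).trans_eq (condExp_one_add_mul_add_mul hm hξ hξ0 hκ)
  have hsplit : (fun ω => exp (L * ξ ω - H * τ ω - H * C ω)) =
      (fun ω => exp (-(H * C ω))) * fun ω => exp (L * ξ ω - H * τ ω) := by
    ext ω; simp only [Pi.mul_apply, ← exp_add]; ring_nf
  have hpull := condExp_mul_of_stronglyMeasurable_left
    (continuous_exp.comp_stronglyMeasurable (hCm.const_mul H).neg)
    (hsplit ▸ integrable_exp_tilt hH hξ hτ hκ (hCm.mono hm).aestronglyMeasurable hC0 hbound) hD
  rw [hsplit]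
  filter_upwards [hpull, hDcond, hC0] with ω h1 h2 h3
  calc _ = exp (-(H * C ω)) * μ[fun ω => exp (L * ξ ω - H * τ ω)|m'] ω := h1
    _ ≤ exp (-(H * C ω)) * exp (H * C ω) := by
      gcongr; exact h2.trans (by linarith [add_one_le_exp (H * C ω)])
    _ = 1 := by rw [← exp_add, neg_add_cancel, exp_zero]
end
section
variable {Ω : Type*} {m : MeasurableSpace Ω} {μ : Measure Ω} [IsProbabilityMeasure μ]
  {𝔉 : ℕ → MeasurableSpace Ω}

lemma lintegral_prod_ofReal_le_one (hle : ∀ i, 𝔉 i ≤ m) (hmono : Monotone 𝔉) {G : ℕ → Ω → ℝ}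
    (hG0 : ∀ i, 0 ≤ᵐ[μ] G i) (hGm : ∀ i, Measurable[𝔉 i] (G i)) (hG : ∀ i, Integrable (G i) μ)
    (hcond : ∀ i, 1 ≤ i → μ[G i|𝔉 (i - 1)] ≤ᵐ[μ] 1) (n : ℕ) :
    ∫⁻ ω, ∏ i ∈ Icc 1 n, ENNReal.ofReal (G i ω) ∂μ ≤ 1 := by
  induction n with
  | zero => simp
  | succ n ih =>
    simp_rw [prod_Icc_succ_top (Nat.le_add_left 1 n)]
    refine (lintegral_mul_ofReal_le_of_condExp_le_one (hle n) ?_ (hG0 _) (hG _)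
      (hcond (n + 1) (Nat.le_add_left 1 n))).trans ih
    exact Finset.measurable_prod _ fun i hi =>
      ((hGm i).mono (hmono (mem_Icc.1 hi).2) le_rfl).ennreal_ofReal

lemma lintegral_exp_sum_tilt_le_one (hle : ∀ i, 𝔉 i ≤ m) (hmono : Monotone 𝔉)
    {ξ τ κ : ℕ → Ω → ℝ} {L H : ℝ} (hH : 0 ≤ H) (hξm : ∀ i, StronglyMeasurable[𝔉 i] (ξ i))
    (hξ : ∀ i, Integrable (ξ i) μ)
    (hmart : ∀ i, 1 ≤ i → μ[ξ i|𝔉 (i - 1)] =ᵐ[μ] 0) (hτm : ∀ i, StronglyMeasurable[𝔉 i] (τ i))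
    (hκ : ∀ i, Integrable (κ i) μ) (hκ0 : ∀ i, 0 ≤ᵐ[μ] κ i)
    (hbound : ∀ i ω, exp (L * ξ i ω - H * τ i ω) ≤ 1 + L * ξ i ω + H * κ i ω) (n : ℕ) :
    ∫⁻ ω, ENNReal.ofReal
      (exp (∑ i ∈ Icc 1 n, (L * ξ i ω - H * τ i ω - H * μ[κ i|𝔉 (i - 1)] ω))) ∂μ ≤ 1 := by
  simp_rw [exp_sum, ENNReal.ofReal_prod_of_nonneg fun i _ => (exp_pos _).le]
  have hCm (i : ℕ) : StronglyMeasurable[𝔉 i] μ[κ i|𝔉 (i - 1)] :=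
    stronglyMeasurable_condExp.mono (hmono (Nat.sub_le i 1))
  refine lintegral_prod_ofReal_le_one hle hmono
    (fun i => ae_of_all _ fun ω => (exp_pos _).le) (fun i => ?_) (fun i => ?_)
    (fun i hi => condExp_exp_tilt_le_one (hle _) hH (hξ i) (hmart i hi)
      ((hτm i).mono (hle i)).aestronglyMeasurable (hκ i) (hκ0 i) (hbound i)) n
  · exact ((((hξm i).measurable.const_mul L).sub ((hτm i).measurable.const_mul H)).sub
      ((hCm i).measurable.const_mul H)).exp
  · exact integrable_exp_tilt hH (hξ i) ((hτm i).mono (hle i)).aestronglyMeasurable (hκ i)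
      ((hCm i).mono (hle i)).aestronglyMeasurable (condExp_nonneg (hκ0 i)) (hbound i)
end

section
variable {Ω : Type*} {m : MeasurableSpace Ω} {μ : Measure Ω}

lemma measure_le_setLIntegral_exp_rpow {A : Set Ω} {z : Ω → ℝ}
    (hz : AEMeasurable z (μ.restrict A))
    (hexp : ∫⁻ ω in A, ENNReal.ofReal (exp (z ω)) ∂μ ≤ 1) {p : ℝ} (hp : 1 < p) :
    μ A ≤ (∫⁻ ω in A, ENNReal.ofReal (exp (-(p - 1) * z ω)) ∂μ) ^ (1 / p) := by
  set q := p / (p - 1)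
  have hp0 : 0 < p := by linarith
  have hq0 : 0 < q := div_pos hp0 (by linarith)
  set a := (p - 1) / p
  have hpow (b r : ℝ) (hr : 0 < r) (ω : Ω) :
      ENNReal.ofReal (exp (b * z ω)) ^ r = ENNReal.ofReal (exp (b * r * z ω)) := by
    rw [ENNReal.ofReal_rpow_of_nonneg (exp_pos _).le hr.le, ← exp_mul]; ring_nf
  calc μ A = ∫⁻ ω in A, ENNReal.ofReal (exp (-a * z ω)) * ENNReal.ofReal (exp (a * z ω)) ∂μ := by
        simp_rw [← ENNReal.ofReal_mul (exp_pos _).le, ← exp_add]; simp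
    _ ≤ (∫⁻ ω in A, ENNReal.ofReal (exp (-a * z ω)) ^ p ∂μ) ^ (1 / p) *
        (∫⁻ ω in A, ENNReal.ofReal (exp (a * z ω)) ^ q ∂μ) ^ (1 / q) :=
      ENNReal.lintegral_mul_le_Lp_mul_Lq _ (Real.HolderConjugate.conjExponent hp)
        (by fun_prop) (by fun_prop)
    _ ≤ (∫⁻ ω in A, ENNReal.ofReal (exp (-(p - 1) * z ω)) ∂μ) ^ (1 / p) * 1 := by
      simp_rw [hpow _ _ hp0, hpow _ _ hq0]
      have hp1 : p - 1 ≠ 0 := by linarith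
      have ha : a * q = 1 := by simp only [a, q]; field_simp
      have hb : -a * p = -(p - 1) := by simp only [a]; field_simp
      simp_rw [ha, hb, one_mul]
      gcongr
      exact ENNReal.rpow_le_one hexp (by positivity)
    _ = _ := mul_one _

lemma measureReal_le_setIntegral_exp_rpow [IsFiniteMeasure μ] {A : Set Ω} {z : Ω → ℝ}
    (hz : AEMeasurable z (μ.restrict A)) (hz0 : ∀ᵐ ω ∂μ.restrict A, 0 ≤ z ω)
    (hexp : ∫⁻ ω in A, ENNReal.ofReal (exp (z ω)) ∂μ ≤ 1) {p : ℝ} (hp : 1 < p) :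
    (μ A).toReal ≤ (∫ ω in A, exp (-(p - 1) * z ω) ∂μ) ^ (1 / p) := by
  have hint : IntegrableOn (fun ω => exp (-(p - 1) * z ω)) A μ := by
    refine (integrable_const 1).mono' (by fun_prop) ?_
    filter_upwards [hz0] with ω hω
    rw [norm_of_nonneg (exp_pos _).le, exp_le_one_iff]
    nlinarith
  have h := measure_le_setLIntegral_exp_rpow hz hexp hp
  rw [← ofReal_integral_eq_lintegral_ofReal hint (ae_of_all _ fun _ => (exp_pos _).le)] at h
  have h' := ENNReal.toReal_mono (ENNReal.rpow_ne_top_of_nonneg (by positivity)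
    ENNReal.ofReal_ne_top) h
  rwa [← ENNReal.toReal_rpow, ENNReal.toReal_ofReal (integral_nonneg fun _ => (exp_pos _).le)] at h'
end

noncomputable def truncatedQuadVar {Ω : Type*} {m : MeasurableSpace Ω} (μ : Measure Ω)
    (𝔉 : ℕ → MeasurableSpace Ω) (ξ : ℕ → Ω → ℝ) (y : ℝ) (n : ℕ) (ω : Ω) : ℝ :=
  (∑ i ∈ Icc 1 n, if y < ξ i ω then ξ i ω ^ 2 else 0) +
    ∑ i ∈ Icc 1 n, μ[fun ω' => if ξ i ω' ≤ y then ξ i ω' ^ 2 else 0|𝔉 (i - 1)] ω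
section
variable {Ω : Type*} {m : MeasurableSpace Ω} {μ : Measure Ω} {𝔉 : ℕ → MeasurableSpace Ω}
  {ξ : ℕ → Ω → ℝ} {y : ℝ} {n : ℕ}

lemma measurable_truncatedQuadVar (hle : ∀ i, 𝔉 i ≤ m)
    (hadp : ∀ i, StronglyMeasurable[𝔉 i] (ξ i)) : Measurable (truncatedQuadVar μ 𝔉 ξ y n) := by
  refine (Finset.measurable_sum _ fun i _ => ?_).add
    (Finset.measurable_sum _ fun i _ => stronglyMeasurable_condExp.measurable.mono (hle _) le_rfl)
  have hξ := (hadp i).measurable.mono (hle i) le_rfl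
  exact Measurable.ite (measurableSet_lt measurable_const hξ) (hξ.pow_const 2) measurable_const

lemma truncatedQuadVar_nonneg : 0 ≤ᵐ[μ] truncatedQuadVar μ 𝔉 ξ y n := by
  have hC : ∀ᵐ ω ∂μ, ∀ i ∈ Icc 1 n,
      0 ≤ μ[fun ω' => if ξ i ω' ≤ y then ξ i ω' ^ 2 else 0|𝔉 (i - 1)] ω :=
    (Finset.eventually_all _).2 fun i _ => condExp_nonneg (ae_of_all _ fun ω => by positivity)
  filter_upwards [hC] with ω hω
  exact add_nonneg (sum_nonneg fun i _ => by positivity) (sum_nonneg hω)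

lemma lintegral_exp_sub_truncatedQuadVar_le_one [IsProbabilityMeasure μ] (hle : ∀ i, 𝔉 i ≤ m)
    (hmono : Monotone 𝔉) (hadp : ∀ i, StronglyMeasurable[𝔉 i] (ξ i))
    (hsq : ∀ i, Integrable (fun ω => ξ i ω ^ 2) μ) (hmart : ∀ i, 1 ≤ i → μ[ξ i|𝔉 (i - 1)] =ᵐ[μ] 0)
    {L H : ℝ} (hL : 0 ≤ L) (hy : 0 ≤ y) (hH : L ^ 2 / 2 ≤ H)
    (hHy : exp (L * y) - 1 - L * y ≤ H * y ^ 2) :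
    ∫⁻ ω, ENNReal.ofReal
      (exp (L * ∑ i ∈ Icc 1 n, ξ i ω - H * truncatedQuadVar μ 𝔉 ξ y n ω)) ∂μ ≤ 1 := by
  have hξ (i : ℕ) : Integrable (ξ i) μ :=
    ((memLp_two_iff_integrable_sq ((hadp i).mono (hle i)).aestronglyMeasurable).2
      (hsq i)).integrable one_le_two
  have hκ (i : ℕ) : Integrable (fun ω => if ξ i ω ≤ y then ξ i ω ^ 2 else 0) μ := by
    refine (hsq i).mono' ?_ (ae_of_all _ fun ω => ?_)
    · have hξm := (hadp i).measurable.mono (hle i) le_rfl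
      exact (Measurable.ite (measurableSet_le hξm measurable_const) (hξm.pow_const 2)
        measurable_const).aestronglyMeasurable
    · split_ifs <;> simp [sq_nonneg]
  have hτ (i : ℕ) : StronglyMeasurable[𝔉 i] fun ω => if y < ξ i ω then ξ i ω ^ 2 else 0 :=
    (Measurable.ite (measurableSet_lt measurable_const (hadp i).measurable)
      ((hadp i).measurable.pow_const 2) measurable_const).stronglyMeasurable
  convert lintegral_exp_sum_tilt_le_one hle hmono ((by positivity : 0 ≤ L ^ 2 / 2).trans hH)
    hadp hξ hmart hτ hκ (fun i => ae_of_all _ fun ω => by positivity)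
    (fun i ω => exp_tilt_le hL hy hH hHy (ξ i ω)) n using 5 with ω
  simp only [truncatedQuadVar, sum_sub_distrib, ← mul_sum]; ring
end

theorem stmt_5 {Ω : Type*} {m : MeasurableSpace Ω} {μ : Measure Ω} [IsProbabilityMeasure μ]
    (𝔉 : ℕ → MeasurableSpace Ω) (hle : ∀ i, 𝔉 i ≤ m) (hmono : Monotone 𝔉)
    (ξ : ℕ → Ω → ℝ)
    (hadp : ∀ i, StronglyMeasurable[𝔉 i] (ξ i))
    (hsq : ∀ i, Integrable (fun ω => (ξ i ω) ^ 2) μ)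
    (hmart : ∀ i : ℕ, 1 ≤ i → μ[ξ i | 𝔉 (i - 1)] =ᵐ[μ] 0)
    (n : ℕ) (x y : ℝ) (hx : 0 ≤ x) (hy : 0 ≤ y) (p : ℝ) (hp : 1 < p)
    (S B : Ω → ℝ)
    (hS : S = fun ω => ∑ i ∈ Finset.Icc 1 n, ξ i ω)
    (hB : B = fun ω =>
      (∑ i ∈ Finset.Icc 1 n, if y < ξ i ω then (ξ i ω) ^ 2 else 0)
        + ∑ i ∈ Finset.Icc 1 n,
            (μ[fun ω' => if ξ i ω' ≤ y then (ξ i ω') ^ 2 else 0 | 𝔉 (i - 1)]) ω) :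
    (μ {ω | x * B ω ≤ S ω}).toReal ≤
      (∫ ω in {ω | x * B ω ≤ S ω}, Real.exp (-(p - 1) * f x y * B ω) ∂μ) ^ (1 / p) := by
  subst hS
  obtain rfl : B = truncatedQuadVar μ 𝔉 ξ y n := hB
  obtain ⟨L, H, hL, hH, hHy, hf⟩ := exists_tilt_f_eq hx hy
  have hBm := measurable_truncatedQuadVar (μ := μ) (y := y) (n := n) hle hadp
  have hSm : Measurable fun ω => ∑ i ∈ Icc 1 n, ξ i ω :=
    Finset.measurable_sum _ fun i _ => (hadp i).measurable.mono (hle i) le_rfl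
  simp_rw [mul_assoc (-(p - 1))]
  refine measureReal_le_setIntegral_exp_rpow (by fun_prop) ?_ ?_ hp
  · filter_upwards [ae_restrict_of_ae truncatedQuadVar_nonneg] with ω hω
    exact mul_nonneg (f_nonneg hx hy) hω
  · calc ∫⁻ ω in _, ENNReal.ofReal (exp (f x y * truncatedQuadVar μ 𝔉 ξ y n ω)) ∂μ
        ≤ ∫⁻ ω in _, ENNReal.ofReal
            (exp (L * ∑ i ∈ Icc 1 n, ξ i ω - H * truncatedQuadVar μ 𝔉 ξ y n ω)) ∂μ := by
          refine setLIntegral_mono (by fun_prop) fun ω hω => ?_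
          have hxB : L * (x * truncatedQuadVar μ 𝔉 ξ y n ω) ≤ L * ∑ i ∈ Icc 1 n, ξ i ω :=
            mul_le_mul_of_nonneg_left hω hL
          gcongr
          rw [hf]; linarith
      _ ≤ ∫⁻ ω, ENNReal.ofReal
            (exp (L * ∑ i ∈ Icc 1 n, ξ i ω - H * truncatedQuadVar μ 𝔉 ξ y n ω)) ∂μ :=
          setLIntegral_le_lintegral _ _
      _ ≤ 1 := lintegral_exp_sub_truncatedQuadVar_le_one hle hmono hadp hsq hmart hL hy hH hHy
end

section
/- Let (ξ_i, 𝔉_i) be square-integrable martingale differences, S_n = Σ ξ_i, B_n(y) = Σ ξ_i² 1_{ξ_i > y} + Σ E[ξ_i² 1_{ξ_i ≤ y} | 𝔉_{i-1}]. Then for all x, y ≥ 0 and every p > 1, P(S_n ≥ x B_n(y)) ≤ (E[exp{-(p-1) x²/(2(1 + xy/3)) B_n(y)}])^{1/p}. -/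
open MeasureTheory Real Finset

/-! With `l = x / (1 + x y / 3)` and `c = x² / (2 (1 + x y / 3)) = l² / (2 (1 - l y / 3))`, the
elementary inequality `exp (l t - c t² 1{t > y}) ≤ 1 + l t + c t² 1{t ≤ y}` (Bernstein's
`exp u ≤ 1 + u + u² / (2 (1 - u / 3))` for `0 ≤ u < 3` below `y`, `log (1 + v) ≥ v - v² / 2` above
it), the martingale property and `1 + a ≤ exp a` make `exp (l S_k - c B_k)` a supermartingale, so
`E exp (l S_n - c B_n) ≤ 1`. Since `l x = 2 c`, on `{S_n ≥ x B_n}` we have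
`1 ≤ exp ((l S_n - c B_n) / q) · exp (-c B_n / q)` with `q` the conjugate exponent of `p`, and
Hölder's inequality with exponents `q`, `p` gives the bound. -/

namespace Real

lemma exp_le_one_add_add_sq_div_two_of_nonpos {u : ℝ} (hu : u ≤ 0) :
    exp u ≤ 1 + u + u ^ 2 / 2 := by
  have hpos : 0 < 1 - u + u ^ 2 / 2 := by nlinarith
  -- `(1 + u + u²/2)(1 - u + u²/2) = 1 + u⁴/4 ≥ 1`
  calc exp u = (exp (-u))⁻¹ := by rw [exp_neg, inv_inv]
    _ ≤ (1 - u + u ^ 2 / 2)⁻¹ := by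
      gcongr
      simpa [sub_eq_add_neg] using quadratic_le_exp_of_nonneg (neg_nonneg.2 hu)
    _ ≤ 1 + u + u ^ 2 / 2 := by
      rw [inv_le_iff_one_le_mul₀ hpos]
      nlinarith [pow_nonneg (sq_nonneg u) 2]

lemma exp_sub_sq_div_two_le_one_add {v : ℝ} (hv : 0 ≤ v) : exp (v - v ^ 2 / 2) ≤ 1 + v := by
  calc exp (v - v ^ 2 / 2) ≤ exp (log (1 + v)) := by
        refine exp_le_exp.2 (le_trans ?_ (le_log_one_add_of_nonneg hv))
        rw [le_div_iff₀ (by linarith)]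
        nlinarith [pow_nonneg hv 3]
    _ = 1 + v := exp_log (by linarith)

lemma exp_le_one_add_add_sq_div_of_lt_three {u : ℝ} (h0 : 0 ≤ u) (h3 : u < 3) :
    exp u ≤ 1 + u + u ^ 2 / (2 * (1 - u / 3)) := by
  have hr0 : 0 ≤ u / 3 := by positivity
  have hr1 : u / 3 < 1 := by linarith
  have hexp : HasSum (fun k : ℕ => u ^ (k + 2) / (k + 2).factorial) (exp u - 1 - u) := by
    have h := (hasSum_nat_add_iff' 2).2 (exp_eq_exp_ℝ ▸ NormedSpace.expSeries_div_hasSum_exp u)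
    simpa [sum_range_succ, sub_sub] using h
  have hgeom : HasSum (fun k : ℕ => u ^ 2 / 2 * (u / 3) ^ k) (u ^ 2 / 2 * (1 - u / 3)⁻¹) :=
    (hasSum_geometric_of_lt_one hr0 hr1).mul_left _
  have hterm (k : ℕ) : u ^ (k + 2) / (k + 2).factorial ≤ u ^ 2 / 2 * (u / 3) ^ k := by
    have hfact : (2 * 3 ^ k : ℝ) ≤ (2 + k).factorial :=
      mod_cast Nat.factorial_mul_pow_le_factorial (m := 2)
    rw [div_pow, add_comm k 2, pow_add]
    calc u ^ 2 * u ^ k / (2 + k).factorial ≤ u ^ 2 * u ^ k / (2 * 3 ^ k) := by gcongr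
      _ = u ^ 2 / 2 * (u ^ k / 3 ^ k) := by ring
  have htail := hasSum_le hterm hexp hgeom
  rw [← div_eq_mul_inv, ← div_mul_eq_div_div] at htail
  linarith

end Real

section Pointwise

variable {l c y : ℝ}

lemma sq_div_two_le_of_sq_div_le (hly : l * y < 3) (hly0 : 0 ≤ l * y)
    (hc : l ^ 2 / (2 * (1 - l * y / 3)) ≤ c) : l ^ 2 / 2 ≤ c :=
  le_trans (div_le_div_of_nonneg_left (sq_nonneg l) (by linarith) (by linarith)) hc

lemma mul_sub_mul_upper_sq_le (hl : 0 ≤ l) (hy : 0 ≤ y) (hc : l ^ 2 / 2 ≤ c) (t : ℝ) :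
    l * t - c * (if y < t then t ^ 2 else 0) ≤ l * y + 1 := by
  have hly : 0 ≤ l * y := mul_nonneg hl hy
  split_ifs with h
  · nlinarith [sq_nonneg (l * t - 1), mul_le_mul_of_nonneg_right hc (sq_nonneg t)]
  · nlinarith [mul_le_mul_of_nonneg_left (not_lt.1 h) hl]

lemma exp_mul_sub_mul_upper_sq_le (hl : 0 ≤ l) (hy : 0 ≤ y) (hly : l * y < 3)
    (hc : l ^ 2 / (2 * (1 - l * y / 3)) ≤ c) (t : ℝ) :
    exp (l * t - c * (if y < t then t ^ 2 else 0))
      ≤ 1 + l * t + c * (if t ≤ y then t ^ 2 else 0) := by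
  have hc2 : l ^ 2 / 2 * t ^ 2 ≤ c * t ^ 2 :=
    mul_le_mul_of_nonneg_right (sq_div_two_le_of_sq_div_le hly (mul_nonneg hl hy) hc) (sq_nonneg t)
  by_cases hyt : y < t
  · rw [if_pos hyt, if_neg (not_le.2 hyt)]
    have hlt : 0 ≤ l * t := mul_nonneg hl (hy.trans hyt.le)
    calc exp (l * t - c * t ^ 2) ≤ exp (l * t - (l * t) ^ 2 / 2) := exp_le_exp.2 (by nlinarith)
      _ ≤ 1 + l * t := Real.exp_sub_sq_div_two_le_one_add hlt
      _ = 1 + l * t + c * 0 := by ring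
  rw [if_neg hyt, if_pos (not_lt.1 hyt), mul_zero, sub_zero]
  rcases le_or_gt 0 t with ht | ht
  · have hlty : l * t ≤ l * y := mul_le_mul_of_nonneg_left (not_lt.1 hyt) hl
    calc exp (l * t) ≤ 1 + l * t + (l * t) ^ 2 / (2 * (1 - l * t / 3)) :=
          Real.exp_le_one_add_add_sq_div_of_lt_three (mul_nonneg hl ht) (by linarith)
      _ ≤ 1 + l * t + (l * t) ^ 2 / (2 * (1 - l * y / 3)) := by gcongr; linarith
      _ = 1 + l * t + l ^ 2 / (2 * (1 - l * y / 3)) * t ^ 2 := by ring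
      _ ≤ 1 + l * t + c * t ^ 2 := by gcongr
  · calc exp (l * t) ≤ 1 + l * t + (l * t) ^ 2 / 2 :=
          Real.exp_le_one_add_add_sq_div_two_of_nonpos (mul_nonpos_of_nonneg_of_nonpos hl ht.le)
      _ ≤ 1 + l * t + c * t ^ 2 := by nlinarith

end Pointwise

section Martingale

variable {Ω : Type*} {m : MeasurableSpace Ω} {μ : Measure Ω}

lemma Measurable.ite_lt_sq {f : Ω → ℝ} (hf : Measurable[m] f) (y : ℝ) :
    Measurable[m] fun ω => if y < f ω then f ω ^ 2 else 0 :=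
  Measurable.ite (measurableSet_lt measurable_const hf) (hf.pow_const 2) measurable_const

lemma condExp_lower_sq_nonneg (F : MeasurableSpace Ω) (f : Ω → ℝ) (y : ℝ) :
    0 ≤ᵐ[μ] μ[fun ω => if f ω ≤ y then f ω ^ 2 else 0 | F] :=
  condExp_nonneg (ae_of_all _ fun ω => by dsimp only; split_ifs <;> positivity)

lemma measurable_sum_upper_sq_add_sum_condExp {ξ : ℕ → Ω → ℝ} (hξ : ∀ i, Measurable[m] (ξ i))
    {F : ℕ → MeasurableSpace Ω} (hF : ∀ i, F i ≤ m) (y : ℝ) (s : Finset ℕ) :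
    Measurable[m] fun ω => (∑ i ∈ s, if y < ξ i ω then ξ i ω ^ 2 else 0)
      + ∑ i ∈ s, μ[fun ω => if ξ i ω ≤ y then ξ i ω ^ 2 else 0 | F i] ω :=
  (measurable_sum _ fun i _ => (hξ i).ite_lt_sq y).add
    (measurable_sum _ fun i _ => (stronglyMeasurable_condExp.mono (hF i)).measurable)

lemma sum_upper_sq_add_sum_condExp_nonneg (ξ : ℕ → Ω → ℝ) (F : ℕ → MeasurableSpace Ω) (y : ℝ)
    (s : Finset ℕ) :
    0 ≤ᵐ[μ] fun ω => (∑ i ∈ s, if y < ξ i ω then ξ i ω ^ 2 else 0)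
      + ∑ i ∈ s, μ[fun ω => if ξ i ω ≤ y then ξ i ω ^ 2 else 0 | F i] ω := by
  filter_upwards [ae_all_iff.2 fun i => condExp_lower_sq_nonneg (μ := μ) (F i) (ξ i) y] with ω hω
  exact add_nonneg (sum_nonneg fun i _ => by split_ifs <;> positivity) (sum_nonneg fun i _ => hω i)

lemma memLp_exp_div_of_integrable_exp {f : Ω → ℝ} (hf : Measurable f) {q : ℝ} (hq : 0 < q)
    (hint : Integrable (fun ω => exp (f ω)) μ) :
    MemLp (fun ω => exp (f ω / q)) (ENNReal.ofReal q) μ := by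
  refine (integrable_norm_rpow_iff (hf.div_const q).exp.aestronglyMeasurable (by simpa using hq)
    ENNReal.ofReal_ne_top).1 (hint.congr (ae_of_all _ fun ω => ?_))
  dsimp only
  rw [ENNReal.toReal_ofReal hq.le, norm_of_nonneg (exp_nonneg _), ← exp_mul,
    div_mul_cancel₀ _ hq.ne']

-- On the event, the right-hand side is `exp (l (S - x B) / q) ≥ 1` because `l x = 2 c`.
lemma indicator_le_exp_mul_exp {S B : Ω → ℝ} {l c x q : ℝ} (hl : 0 ≤ l) (hq : 0 ≤ q)
    (hlx : l * x = 2 * c) (ω : Ω) :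
    {ω | x * B ω ≤ S ω}.indicator 1 ω ≤ exp (-(c / q) * B ω) * exp ((l * S ω - c * B ω) / q) := by
  by_cases hω : x * B ω ≤ S ω
  · rw [Set.indicator_of_mem (show ω ∈ {ω | x * B ω ≤ S ω} from hω), Pi.one_apply, ← exp_add,
      one_le_exp_iff]
    have : -(c / q) * B ω + (l * S ω - c * B ω) / q = l * (S ω - x * B ω) / q := by
      linear_combination (B ω / q) * hlx
    rw [this]
    exact div_nonneg (mul_nonneg hl (by linarith)) hq
  · rw [Set.indicator_of_notMem (show ω ∉ {ω | x * B ω ≤ S ω} from hω)]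
    positivity

variable [IsFiniteMeasure μ]

lemma integrable_exp_of_ae_le {f : Ω → ℝ} (hf : Measurable f) {K : ℝ} (hK : ∀ᵐ ω ∂μ, f ω ≤ K) :
    Integrable (fun ω => exp (f ω)) μ :=
  .of_bound hf.exp.aestronglyMeasurable (exp K) <| hK.mono fun ω h => by
    rwa [norm_of_nonneg (exp_nonneg _), exp_le_exp]

lemma condExp_exp_mul_sub_mul_upper_sq_le {F : MeasurableSpace Ω} (hF : F ≤ m) {f : Ω → ℝ}
    (hf : Measurable[m] f) (hf2 : Integrable (fun ω => f ω ^ 2) μ) (hf0 : μ[f | F] =ᵐ[μ] 0)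
    {l c y : ℝ} (hl : 0 ≤ l) (hy : 0 ≤ y) (hly : l * y < 3)
    (hc : l ^ 2 / (2 * (1 - l * y / 3)) ≤ c) :
    μ[fun ω => exp (l * f ω - c * (if y < f ω then f ω ^ 2 else 0)) | F]
      ≤ᵐ[μ] fun ω => 1 + c * μ[fun ω => if f ω ≤ y then f ω ^ 2 else 0 | F] ω := by
  set T : Ω → ℝ := fun ω => if f ω ≤ y then f ω ^ 2 else 0
  have hfi : Integrable f μ :=
    ((memLp_two_iff_integrable_sq (μ := μ) hf.aestronglyMeasurable).2 hf2).integrable one_le_two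
  have hTi : Integrable T μ := by
    refine hf2.mono (Measurable.ite (measurableSet_le hf measurable_const) (hf.pow_const 2)
      measurable_const).aestronglyMeasurable (ae_of_all _ fun ω => ?_)
    simp only [T]
    split_ifs <;> simp [sq_nonneg]
  have hexpi : Integrable (fun ω => exp (l * f ω - c * (if y < f ω then f ω ^ 2 else 0))) μ :=
    integrable_exp_of_ae_le ((hf.const_mul l).sub ((hf.ite_lt_sq y).const_mul c))
      (ae_of_all _ fun ω => mul_sub_mul_upper_sq_le hl hy
        (sq_div_two_le_of_sq_div_le hly (mul_nonneg hl hy) hc) _)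
  have hlin : μ[(fun _ => 1) + l • f + c • T | F]
      =ᵐ[μ] (fun _ => 1) + l • μ[f | F] + c • μ[T | F] := by
    filter_upwards [condExp_add ((integrable_const 1).add (hfi.smul l)) (hTi.smul c) F,
      condExp_add (integrable_const 1) (hfi.smul l) F, condExp_smul l f F, condExp_smul c T F]
      with ω h₁ h₂ h₃ h₄
    simp only [Pi.add_apply] at h₁ h₂ ⊢
    rw [h₁, h₂, h₃, h₄, condExp_const hF]
  calc μ[fun ω => exp (l * f ω - c * (if y < f ω then f ω ^ 2 else 0)) | F]
      ≤ᵐ[μ] μ[(fun _ => 1) + l • f + c • T | F] :=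
        condExp_mono hexpi (((integrable_const 1).add (hfi.smul l)).add (hTi.smul c))
          (ae_of_all _ fun ω => exp_mul_sub_mul_upper_sq_le hl hy hly hc (f ω))
    _ =ᵐ[μ] fun ω => 1 + c * μ[T | F] ω := by
        filter_upwards [hlin, hf0] with ω h₁ h₂
        simp [h₁, h₂]

lemma supermartingale_exp_sum_sub_s6 {ℱ : Filtration ℕ m} {φ ψ : ℕ → Ω → ℝ} {K : ℝ}
    (hφ : StronglyAdapted ℱ φ) (hφK : ∀ i ω, φ i ω ≤ K)
    (hψ : ∀ i, StronglyMeasurable[ℱ i] (ψ (i + 1))) (hψ0 : ∀ i, 0 ≤ᵐ[μ] ψ i)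
    (hcond : ∀ i, μ[fun ω => exp (φ (i + 1) ω) | ℱ i] ≤ᵐ[μ] fun ω => 1 + ψ (i + 1) ω) :
    Supermartingale (fun k ω => exp (∑ i ∈ Icc 1 k, (φ i ω - ψ i ω))) ℱ μ := by
  set Z : ℕ → Ω → ℝ := fun k ω => exp (∑ i ∈ Icc 1 k, (φ i ω - ψ i ω))
  have hZ_succ (k : ℕ) :
      Z (k + 1) = (fun ω => Z k ω * exp (-ψ (k + 1) ω)) * fun ω => exp (φ (k + 1) ω) := by
    ext ω
    simp only [Z, Pi.mul_apply, ← exp_add, sum_Icc_succ_top (by omega : 1 ≤ k + 1)]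
    ring_nf
  have hsum (k : ℕ) : Measurable[ℱ k] fun ω => ∑ i ∈ Icc 1 k, (φ i ω - ψ i ω) := by
    refine measurable_sum _ fun i hi => ?_
    obtain ⟨hi₁, hik⟩ := mem_Icc.1 hi
    obtain ⟨j, rfl⟩ := Nat.exists_eq_add_of_le' hi₁
    exact ((hφ _).mono (ℱ.mono hik)).measurable.sub ((hψ j).mono (ℱ.mono (by omega))).measurable
  have hadp : StronglyAdapted ℱ Z := fun k => (hsum k).exp.stronglyMeasurable
  have hint (k : ℕ) : Integrable (Z k) μ := by
    refine integrable_exp_of_ae_le ((hsum k).mono (ℱ.le k) le_rfl) (K := k * K) ?_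
    filter_upwards [ae_all_iff.2 hψ0] with ω hω
    calc ∑ i ∈ Icc 1 k, (φ i ω - ψ i ω) ≤ ∑ i ∈ Icc 1 k, K :=
          sum_le_sum fun i _ => by linarith [hφK i ω, show 0 ≤ ψ i ω from hω i]
      _ = k * K := by simp
  refine supermartingale_nat hadp hint fun k => ?_
  have hexpφ : Integrable (fun ω => exp (φ (k + 1) ω)) μ :=
    integrable_exp_of_ae_le ((hφ (k + 1)).mono (ℱ.le _)).measurable (ae_of_all _ (hφK _))
  have hpull : μ[Z (k + 1) | ℱ k] =ᵐ[μ]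
      (fun ω => Z k ω * exp (-ψ (k + 1) ω)) * μ[fun ω => exp (φ (k + 1) ω) | ℱ k] := by
    rw [hZ_succ]
    exact condExp_mul_of_stronglyMeasurable_left
      ((hadp k).mul (hψ k).measurable.neg.exp.stronglyMeasurable) (hZ_succ k ▸ hint (k + 1)) hexpφ
  filter_upwards [hpull, hcond k] with ω h₁ h₂
  rw [h₁, Pi.mul_apply]
  calc Z k ω * exp (-ψ (k + 1) ω) * μ[fun ω => exp (φ (k + 1) ω) | ℱ k] ω
      ≤ Z k ω * exp (-ψ (k + 1) ω) * (1 + ψ (k + 1) ω) := by gcongr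
    _ ≤ Z k ω * exp (-ψ (k + 1) ω) * exp (ψ (k + 1) ω) := by
        gcongr; linarith [add_one_le_exp (ψ (k + 1) ω)]
    _ = Z k ω := by rw [mul_assoc, ← exp_add, neg_add_cancel, exp_zero, mul_one]

lemma measure_le_of_integral_exp_le_one {S B : Ω → ℝ} (hS : Measurable S) (hB : Measurable B)
    (hB0 : 0 ≤ᵐ[μ] B) {l c x p : ℝ} (hl : 0 ≤ l) (hc : 0 ≤ c) (hlx : l * x = 2 * c) (hp : 1 < p)
    (hint : Integrable (fun ω => exp (l * S ω - c * B ω)) μ)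
    (hZ : ∫ ω, exp (l * S ω - c * B ω) ∂μ ≤ 1) :
    (μ {ω | x * B ω ≤ S ω}).toReal ≤ (∫ ω, exp (-(p - 1) * c * B ω) ∂μ) ^ (1 / p) := by
  set q := p / (p - 1)
  have hpq : p.HolderConjugate q := (Real.holderConjugate_iff_eq_conjExponent hp).2 rfl
  have hq : 0 < q := hpq.symm.pos
  have hUL : MemLp (fun ω => exp ((l * S ω - c * B ω) / q)) (ENNReal.ofReal q) μ :=
    memLp_exp_div_of_integrable_exp ((hS.const_mul l).sub (hB.const_mul c)) hq hint
  have hVm : AEStronglyMeasurable (fun ω => exp (-(c / q) * B ω)) μ :=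
    (hB.const_mul _).exp.aestronglyMeasurable
  have hV1 : ∀ᵐ ω ∂μ, ‖exp (-(c / q) * B ω)‖ ≤ 1 := by
    filter_upwards [hB0] with ω hω
    rw [norm_of_nonneg (exp_nonneg _), exp_le_one_iff]
    exact mul_nonpos_of_nonpos_of_nonneg (neg_nonpos.2 (div_nonneg hc hq.le)) hω
  have hA : MeasurableSet {ω | x * B ω ≤ S ω} := measurableSet_le (hB.const_mul x) hS
  calc (μ {ω | x * B ω ≤ S ω}).toReal = ∫ ω, {ω | x * B ω ≤ S ω}.indicator 1 ω ∂μ :=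
        (integral_indicator_one hA).symm
    _ ≤ ∫ ω, exp (-(c / q) * B ω) * exp ((l * S ω - c * B ω) / q) ∂μ :=
        integral_mono ((integrable_const 1).indicator hA)
          ((hUL.integrable (ENNReal.one_le_ofReal.2 hpq.symm.lt.le)).bdd_mul hVm hV1)
          (indicator_le_exp_mul_exp hl hq.le hlx)
    _ ≤ (∫ ω, exp (-(c / q) * B ω) ^ p ∂μ) ^ (1 / p)
          * (∫ ω, exp ((l * S ω - c * B ω) / q) ^ q ∂μ) ^ (1 / q) :=
        integral_mul_le_Lp_mul_Lq_of_nonneg hpq (ae_of_all _ fun _ => exp_nonneg _)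
          (ae_of_all _ fun _ => exp_nonneg _) (.of_bound hVm 1 hV1) hUL
    _ ≤ (∫ ω, exp (-(c / q) * B ω) ^ p ∂μ) ^ (1 / p) := by
        refine mul_le_of_le_one_right (by positivity) (rpow_le_one ?_ ?_ (by positivity))
        · exact integral_nonneg fun ω => by positivity
        · simpa only [← exp_mul, div_mul_cancel₀ _ hq.ne'] using hZ
    _ = (∫ ω, exp (-(p - 1) * c * B ω) ∂μ) ^ (1 / p) := by
        congr 2 with ω
        rw [← exp_mul, ← hpq.div_conj_eq_sub_one]
        ring_nf

lemma supermartingale_exp_bernstein {ℱ : Filtration ℕ m} {ξ : ℕ → Ω → ℝ}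
    (hadp : StronglyAdapted ℱ ξ) (hsq : ∀ i, Integrable (fun ω => ξ i ω ^ 2) μ)
    (hmart : ∀ i, μ[ξ (i + 1) | ℱ i] =ᵐ[μ] 0) {l c y : ℝ} (hl : 0 ≤ l) (hy : 0 ≤ y)
    (hly : l * y < 3) (hc : l ^ 2 / (2 * (1 - l * y / 3)) ≤ c) :
    Supermartingale (fun k ω => exp (∑ i ∈ Icc 1 k,
      (l * ξ i ω - c * (if y < ξ i ω then ξ i ω ^ 2 else 0)
        - c * μ[fun ω => if ξ i ω ≤ y then ξ i ω ^ 2 else 0 | ℱ (i - 1)] ω))) ℱ μ := by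
  have hc0 : 0 ≤ c := (sq_div_two_le_of_sq_div_le hly (mul_nonneg hl hy) hc).trans' (by positivity)
  refine supermartingale_exp_sum_sub_s6 (K := l * y + 1)
    (φ := fun i ω => l * ξ i ω - c * (if y < ξ i ω then ξ i ω ^ 2 else 0))
    (ψ := fun i ω => c * μ[fun ω => if ξ i ω ≤ y then ξ i ω ^ 2 else 0 | ℱ (i - 1)] ω)
    (fun i => ?_) (fun i ω => ?_) (fun i => ?_) (fun i => ?_) (fun i => ?_)
  · have hξ := (hadp i).measurable
    exact ((hξ.const_mul l).sub ((hξ.ite_lt_sq y).const_mul c)).stronglyMeasurable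
  · exact mul_sub_mul_upper_sq_le hl hy (sq_div_two_le_of_sq_div_le hly (mul_nonneg hl hy) hc) _
  · exact stronglyMeasurable_condExp.const_mul c
  · filter_upwards [condExp_lower_sq_nonneg (ℱ (i - 1)) (ξ i) y] with ω hω
    exact mul_nonneg hc0 hω
  · exact condExp_exp_mul_sub_mul_upper_sq_le (ℱ.le i) ((hadp (i + 1)).mono (ℱ.le _)).measurable
      (hsq _) (hmart i) hl hy hly hc

end Martingale

theorem stmt_6 {Ω : Type*} {m : MeasurableSpace Ω} {μ : Measure Ω} [IsProbabilityMeasure μ]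
    (𝔉 : ℕ → MeasurableSpace Ω) (hle : ∀ i, 𝔉 i ≤ m) (hmono : Monotone 𝔉)
    (ξ : ℕ → Ω → ℝ)
    (hadp : ∀ i, StronglyMeasurable[𝔉 i] (ξ i))
    (hsq : ∀ i, Integrable (fun ω => (ξ i ω) ^ 2) μ)
    (hmart : ∀ i : ℕ, 1 ≤ i → μ[ξ i | 𝔉 (i - 1)] =ᵐ[μ] 0)
    (n : ℕ) (x y : ℝ) (hx : 0 ≤ x) (hy : 0 ≤ y) (p : ℝ) (hp : 1 < p)
    (S B : Ω → ℝ)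
    (hS : S = fun ω => ∑ i ∈ Finset.Icc 1 n, ξ i ω)
    (hB : B = fun ω =>
      (∑ i ∈ Finset.Icc 1 n, if y < ξ i ω then (ξ i ω) ^ 2 else 0)
        + ∑ i ∈ Finset.Icc 1 n,
            (μ[fun ω' => if ξ i ω' ≤ y then (ξ i ω') ^ 2 else 0 | 𝔉 (i - 1)]) ω) :
    (μ {ω | x * B ω ≤ S ω}).toReal ≤
      (∫ ω, Real.exp (-(p - 1) * (x ^ 2 / (2 * (1 + x * y / 3))) * B ω) ∂μ) ^ (1 / p) := by
  subst hS hB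
  have hd : 0 < 1 + x * y / 3 := by positivity
  set c := x ^ 2 / (2 * (1 + x * y / 3))
  set l := x / (1 + x * y / 3)
  have hly : l * y < 3 := by
    rw [div_mul_eq_mul_div, div_lt_iff₀ hd]
    linarith [mul_nonneg hx hy]
  have hc : l ^ 2 / (2 * (1 - l * y / 3)) = c := by
    have : 1 - l * y / 3 = (1 + x * y / 3)⁻¹ := by simp only [l]; field_simp; ring
    rw [this]; simp only [l, c]; field_simp
  have hlx : l * x = 2 * c := by simp only [l, c]; field_simp
  have hξ (i : ℕ) : Measurable[m] (ξ i) := ((hadp i).mono (hle i)).measurable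
  have hZ := supermartingale_exp_bernstein (ℱ := ⟨𝔉, hmono, hle⟩) hadp hsq
    (fun i => hmart (i + 1) le_add_self) (by positivity) hy hly hc.le
  have hSB (ω : Ω) : l * ∑ i ∈ Icc 1 n, ξ i ω - c * ((∑ i ∈ Icc 1 n,
      if y < ξ i ω then ξ i ω ^ 2 else 0) + ∑ i ∈ Icc 1 n,
        μ[fun ω' => if ξ i ω' ≤ y then ξ i ω' ^ 2 else 0 | 𝔉 (i - 1)] ω) =
      ∑ i ∈ Icc 1 n, (l * ξ i ω - c * (if y < ξ i ω then ξ i ω ^ 2 else 0)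
        - c * μ[fun ω' => if ξ i ω' ≤ y then ξ i ω' ^ 2 else 0 | 𝔉 (i - 1)] ω) := by
    simp only [sum_sub_distrib, mul_sum, mul_add]
    ring
  refine measure_le_of_integral_exp_le_one (measurable_sum _ fun i _ => hξ i)
    (measurable_sum_upper_sq_add_sum_condExp hξ (fun i => hle (i - 1)) y _)
    (sum_upper_sq_add_sum_condExp_nonneg ξ (fun i => 𝔉 (i - 1)) y _) (by positivity)
    (by positivity) hlx hp ?_ ?_
  · simp_rw [hSB]
    exact hZ.integrable n
  · simp_rw [hSB]
    simpa using hZ.setIntegral_le (Nat.zero_le n) MeasurableSet.univ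
end

section
/- Let (ξ_i, 𝔉_i) be square-integrable martingale differences such that each ξ_i is heavy on left, i.e. E[ξ_i | 𝔉_{i-1}] = 0 and E[min(|ξ_i|, a) sign(ξ_i) | 𝔉_{i-1}] ≤ 0 for all a > 0. Let S_n = Σ ξ_i and [S]_n = Σ ξ_i². Then for all b > 0, M ≥ 1 and x > 0, P(S_n ≥ x √([S]_n), b ≤ √([S]_n) ≤ bM) ≤ √e (1 + 2(1+x) ln M) exp{- x²/2}. -/
open MeasureTheory Real Finset

/-!
The representation `exp (y - y²/2) ≤ 1 + ∫₀¹ w(a) T_a(y) da`, with a weight `w ≥ 0` on `[0, 1]`,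
turns the heavy-on-left condition `E[T_a(ξ) | 𝔉] ≤ 0` into the one-step inequality
`E[Z exp(θξ - θ²ξ²/2)] ≤ E[Z]` for bounded `Z ≥ 0` measurable in the past, since
`T_a(θξ) = θ T_{a/θ}(ξ)`. Iterating, `exp(θ S_n - θ² [S]_n / 2)` has expectation at most `1`
(Bercu–Touati), and Markov's inequality bounds `P(θ S_n - θ² [S]_n / 2 ≥ c)` by `e^{-c}`.
Peeling: with `δ = 1 + 1/x`, the range `b ≤ √[S]_n ≤ bM` is covered by at most
`1 + (1 + x) log M` slices `b δ^k ≤ √[S]_n ≤ b δ^(k+1)`, and on a slice the choice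
`θ = x / (b δ^(k+1))` gives `θ S_n - θ² [S]_n / 2 ≥ x²/2 - 1/2`.
-/

/-- `T_a(y)` in the paper. -/
noncomputable def truncation (a y : ℝ) : ℝ := min |y| a * Real.sign y

/-- `w = -φ''` for `φ u = exp (u - u²/2)`, so that `∫₀¹ w a * min a u da = φ u - 1` on `[0, 1]`. -/
noncomputable def truncWeight (a : ℝ) : ℝ := (2 * a - a ^ 2) * exp (a - a ^ 2 / 2)

lemma abs_truncation_le {a : ℝ} (y : ℝ) (ha : 0 ≤ a) : |truncation a y| ≤ a := by
  rcases Real.sign_apply_eq y with h | h | h <;>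
    simp [truncation, h, abs_of_nonneg (le_min (abs_nonneg y) ha), ha]

lemma truncation_mul_left {θ : ℝ} (a y : ℝ) (hθ : 0 < θ) :
    truncation a (θ * y) = θ * truncation (a / θ) y := by
  have hsign : Real.sign (θ * y) = Real.sign y := by
    rcases lt_trichotomy y 0 with hy | rfl | hy
    · rw [sign_of_neg hy, sign_of_neg (mul_neg_of_pos_of_neg hθ hy)]
    · simp
    · rw [sign_of_pos hy, sign_of_pos (mul_pos hθ hy)]
  rw [truncation, truncation, hsign, abs_mul, abs_of_pos hθ, ← mul_div_cancel₀ a hθ.ne',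
    ← mul_min_of_nonneg _ _ hθ.le, mul_div_cancel_left₀ _ hθ.ne', mul_assoc]

lemma measurable_truncation : Measurable fun p : ℝ × ℝ => truncation p.1 p.2 := by
  have hsign : Measurable Real.sign :=
    Measurable.ite measurableSet_Iio measurable_const
      (Measurable.ite measurableSet_Ioi measurable_const measurable_const)
  exact ((measurable_abs.comp measurable_snd).min measurable_fst).mul (hsign.comp measurable_snd)

lemma truncation_eq_sign_mul_min {a : ℝ} (y : ℝ) (ha : a ≤ 1) :
    truncation a y = Real.sign y * min a (min |y| 1) := by
  rw [truncation, mul_comm, ← min_assoc, min_eq_left ((min_le_left a _).trans ha), min_comm]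

lemma truncWeight_nonneg {a : ℝ} (h0 : 0 ≤ a) (h2 : a ≤ 2) : 0 ≤ truncWeight a :=
  mul_nonneg (by nlinarith) (exp_pos _).le

lemma continuous_truncWeight : Continuous truncWeight := by
  unfold truncWeight; fun_prop

lemma hasDerivAt_exp_sub_sq_half (u : ℝ) :
    HasDerivAt (fun t => exp (t - t ^ 2 / 2)) ((1 - u) * exp (u - u ^ 2 / 2)) u := by
  have h : HasDerivAt (fun t : ℝ => t - t ^ 2 / 2) (1 - u) u :=
    ((hasDerivAt_id' u).sub ((hasDerivAt_pow 2 u).div_const 2)).congr_deriv (by ring)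
  simpa [mul_comm] using h.exp

lemma integral_truncWeight_mul_min {u : ℝ} (hu0 : 0 ≤ u) (hu1 : u ≤ 1) :
    ∫ a in (0 : ℝ)..1, truncWeight a * min a u = exp (u - u ^ 2 / 2) - 1 := by
  have hint : ∀ p q : ℝ, IntervalIntegrable (fun a => truncWeight a * min a u) volume p q :=
    fun p q =>
      (continuous_truncWeight.mul (continuous_id.min continuous_const)).intervalIntegrable p q
  have hlow : ∫ a in (0 : ℝ)..u, truncWeight a * min a u =
      (1 - u + u ^ 2) * exp (u - u ^ 2 / 2) - 1 := by
    have := intervalIntegral.integral_eq_sub_of_hasDerivAt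
      (f := fun t => (1 - t + t ^ 2) * exp (t - t ^ 2 / 2)) (fun a ha => ?_) (hint 0 u)
    · simpa using this
    rw [Set.uIcc_of_le hu0] at ha
    refine ((((hasDerivAt_id' a).const_sub 1).add (hasDerivAt_pow 2 a)).mul
      (hasDerivAt_exp_sub_sq_half a)).congr_deriv ?_
    rw [min_eq_left ha.2, truncWeight, Pi.add_apply]; ring
  have hhigh : ∫ a in u..1, truncWeight a * min a u = -(u * ((u - 1) * exp (u - u ^ 2 / 2))) := by
    have := intervalIntegral.integral_eq_sub_of_hasDerivAt
      (f := fun t => u * ((t - 1) * exp (t - t ^ 2 / 2))) (fun a ha => ?_) (hint u 1)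
    · simpa using this
    rw [Set.uIcc_of_le hu1] at ha
    refine ((((hasDerivAt_id' a).sub_const 1).mul (hasDerivAt_exp_sub_sq_half a)).const_mul
      u).congr_deriv ?_
    rw [min_eq_right ha.1, truncWeight]; ring
  rw [← intervalIntegral.integral_add_adjacent_intervals (hint 0 u) (hint u 1), hlow, hhigh]
  ring

lemma integral_truncWeight_mul_truncation (y : ℝ) :
    ∫ a in (0 : ℝ)..1, truncWeight a * truncation a y =
      Real.sign y * (exp (min |y| 1 - min |y| 1 ^ 2 / 2) - 1) := by
  rw [← integral_truncWeight_mul_min (le_min (abs_nonneg y) zero_le_one) (min_le_right _ _),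
    ← intervalIntegral.integral_const_mul]
  refine intervalIntegral.integral_congr fun a ha => ?_
  rw [Set.uIcc_of_le zero_le_one] at ha
  simp only [truncation_eq_sign_mul_min y ha.2]
  ring

lemma exp_sub_sq_half_add_exp_neg_sub_sq_half_le_two (y : ℝ) :
    exp (y - y ^ 2 / 2) + exp (-y - y ^ 2 / 2) ≤ 2 := by
  have h := cosh_le_exp_half_sq y
  rw [cosh_eq, div_le_iff₀ two_pos] at h
  calc exp (y - y ^ 2 / 2) + exp (-y - y ^ 2 / 2) = (exp y + exp (-y)) * exp (-(y ^ 2 / 2)) := by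
        rw [add_mul, ← exp_add, ← exp_add]; ring_nf
    _ ≤ exp (y ^ 2 / 2) * 2 * exp (-(y ^ 2 / 2)) := by gcongr
    _ = 2 := by rw [mul_right_comm, ← exp_add, add_neg_cancel, exp_zero, one_mul]

/-- Equality holds for `0 ≤ y ≤ 1`; for `y < 0` the bound comes down to `cosh u ≤ exp (u²/2)`
with `u = min |y| 1`. -/
lemma exp_sub_sq_half_le_one_add_integral (y : ℝ) :
    exp (y - y ^ 2 / 2) ≤ 1 + ∫ a in (0 : ℝ)..1, truncWeight a * truncation a y := by
  rw [integral_truncWeight_mul_truncation]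
  set u := min |y| 1 with hu
  have hu0 : 0 ≤ u := le_min (abs_nonneg y) zero_le_one
  have huy : u ≤ |y| := min_le_left _ _
  rcases lt_trichotomy y 0 with hy | rfl | hy
  · rw [sign_of_neg hy, abs_of_neg hy] at *
    have hcosh := exp_sub_sq_half_add_exp_neg_sub_sq_half_le_two u
    have hyu : exp (y - y ^ 2 / 2) ≤ exp (-u - u ^ 2 / 2) := exp_le_exp.2 (by nlinarith)
    linarith
  · simp
  · rw [sign_of_pos hy, abs_of_pos hy] at *
    have hu1 : u ≤ 1 := min_le_right _ _
    have hyu : y - y ^ 2 / 2 ≤ u - u ^ 2 / 2 := by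
      rcases le_total y 1 with h | h
      · rw [hu, min_eq_left h]
      · rw [hu, min_eq_right h]; nlinarith
    linarith [exp_le_exp.2 hyu]

lemma prod_exp_sub_sq_half_le {ι : Type*} (s : Finset ι) (y : ι → ℝ) :
    ∏ i ∈ s, exp (y i - y i ^ 2 / 2) ≤ exp (1 / 2) ^ #s := by
  rw [← prod_const]
  exact prod_le_prod (fun i _ => (exp_pos _).le) fun i _ =>
    exp_le_exp.2 (by nlinarith [sq_nonneg (y i - 1)])

section OneStep

variable {Ω : Type*} {m' m : MeasurableSpace Ω} {μ : Measure Ω}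

lemma integral_mul_nonpos_of_condExp_nonpos [IsFiniteMeasure μ] (hm : m' ≤ m) {Z g : Ω → ℝ}
    (hZ : StronglyMeasurable[m'] Z) (hZ0 : ∀ ω, 0 ≤ Z ω) {C : ℝ} (hZC : ∀ ω, Z ω ≤ C)
    (hg : Integrable g μ) (hcond : μ[g | m'] ≤ᵐ[μ] 0) :
    ∫ ω, Z ω * g ω ∂μ ≤ 0 := by
  have hpull : μ[Z * g | m'] =ᵐ[μ] Z * μ[g | m'] :=
    condExp_stronglyMeasurable_mul_of_bound hm hZ hg C
      (ae_of_all μ fun ω => by rw [norm_of_nonneg (hZ0 ω)]; exact hZC ω)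
  calc ∫ ω, Z ω * g ω ∂μ = ∫ ω, (μ[Z * g | m']) ω ∂μ := (integral_condExp hm).symm
    _ = ∫ ω, Z ω * (μ[g | m']) ω ∂μ := integral_congr_ae hpull
    _ ≤ 0 := integral_nonpos_of_ae <| hcond.mono fun ω h => mul_nonpos_of_nonneg_of_nonpos (hZ0 ω) h

variable {ζ Z : Ω → ℝ} {C θ : ℝ}

lemma integral_mul_truncation_nonpos [IsFiniteMeasure μ] (hm : m' ≤ m) (hζ : Measurable ζ)
    (hheavy : ∀ a : ℝ, 0 < a → μ[fun ω => truncation a (ζ ω) | m'] ≤ᵐ[μ] 0)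
    (hZ : StronglyMeasurable[m'] Z) (hZ0 : ∀ ω, 0 ≤ Z ω) (hZC : ∀ ω, Z ω ≤ C)
    (hθ : 0 < θ) {a : ℝ} (ha : 0 < a) :
    ∫ ω, Z ω * truncation a (θ * ζ ω) ∂μ ≤ 0 := by
  have hc : 0 < a / θ := div_pos ha hθ
  have hint : Integrable (fun ω => truncation (a / θ) (ζ ω)) μ :=
    .of_bound (measurable_truncation.comp (measurable_const.prodMk hζ)).aestronglyMeasurable
      (a / θ) (ae_of_all _ fun ω => abs_truncation_le _ hc.le)
  simp_rw [truncation_mul_left _ _ hθ, mul_left_comm _ θ, integral_const_mul]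
  exact mul_nonpos_of_nonneg_of_nonpos hθ.le
    (integral_mul_nonpos_of_condExp_nonpos hm hZ hZ0 hZC hint (hheavy _ hc))

lemma integrable_prod_mul_truncWeight_mul_truncation [IsFiniteMeasure μ] (hζ : Measurable ζ)
    (hZ : Measurable Z) (hZ0 : ∀ ω, 0 ≤ Z ω) (hZC : ∀ ω, Z ω ≤ C) :
    Integrable (Function.uncurry fun ω a => Z ω * (truncWeight a * truncation a (ζ ω)))
      (μ.prod (volume.restrict (Set.Ioc 0 1))) := by
  obtain ⟨B, hB⟩ := isCompact_Icc.exists_bound_of_continuousOn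
    (continuous_truncWeight.continuousOn (s := Set.Icc (0 : ℝ) 1))
  have hmeas :
      Measurable (Function.uncurry fun ω a => Z ω * (truncWeight a * truncation a (ζ ω))) :=
    (hZ.comp measurable_fst).mul ((continuous_truncWeight.measurable.comp measurable_snd).mul
      (measurable_truncation.comp (measurable_snd.prodMk (hζ.comp measurable_fst))))
  refine .of_bound hmeas.aestronglyMeasurable (C * B) ?_
  filter_upwards [Measure.quasiMeasurePreserving_snd.ae (ae_restrict_mem measurableSet_Ioc)]
    with p ⟨hp0, hp1⟩
  have hT : |truncation p.2 (ζ p.1)| ≤ 1 := (abs_truncation_le _ hp0.le).trans hp1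
  have hW : |truncWeight p.2| ≤ B := hB _ ⟨hp0.le, hp1⟩
  simp only [Function.uncurry_def, norm_mul, norm_eq_abs, abs_of_nonneg (hZ0 p.1)]
  calc Z p.1 * (|truncWeight p.2| * |truncation p.2 (ζ p.1)|) ≤ C * (B * 1) :=
        mul_le_mul (hZC _) (mul_le_mul hW hT (abs_nonneg _) ((abs_nonneg _).trans hW))
          (by positivity) ((hZ0 p.1).trans (hZC p.1))
    _ = C * B := by ring

lemma integral_integral_mul_truncation_nonpos [IsFiniteMeasure μ] (hm : m' ≤ m)
    (hζ : Measurable ζ) (hheavy : ∀ a : ℝ, 0 < a → μ[fun ω => truncation a (ζ ω) | m'] ≤ᵐ[μ] 0)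
    (hZ : StronglyMeasurable[m'] Z) (hZ0 : ∀ ω, 0 ≤ Z ω) (hZC : ∀ ω, Z ω ≤ C) (hθ : 0 < θ) :
    ∫ ω, (∫ a in Set.Ioc (0 : ℝ) 1, Z ω * (truncWeight a * truncation a (θ * ζ ω))) ∂μ ≤ 0 := by
  rw [integral_integral_swap (integrable_prod_mul_truncWeight_mul_truncation (hζ.const_mul θ)
    (hZ.mono hm).measurable hZ0 hZC)]
  refine integral_nonpos_of_ae ((ae_restrict_mem measurableSet_Ioc).mono fun a ha => ?_)
  simp_rw [mul_left_comm (Z _), integral_const_mul]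
  exact mul_nonpos_of_nonneg_of_nonpos (truncWeight_nonneg ha.1.le (by linarith [ha.2]))
    (integral_mul_truncation_nonpos hm hζ hheavy hZ hZ0 hZC hθ ha.1)

lemma integral_mul_exp_le_integral [IsFiniteMeasure μ] (hm : m' ≤ m) (hζ : Measurable ζ)
    (hheavy : ∀ a : ℝ, 0 < a → μ[fun ω => truncation a (ζ ω) | m'] ≤ᵐ[μ] 0)
    (hZ : StronglyMeasurable[m'] Z) (hZ0 : ∀ ω, 0 ≤ Z ω) (hZC : ∀ ω, Z ω ≤ C) (hθ : 0 < θ) :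
    ∫ ω, Z ω * exp (θ * ζ ω - (θ * ζ ω) ^ 2 / 2) ∂μ ≤ ∫ ω, Z ω ∂μ := by
  have hZm : Measurable Z := (hZ.mono hm).measurable
  set G : Ω → ℝ := fun ω => ∫ a in Set.Ioc (0 : ℝ) 1, Z ω * (truncWeight a * truncation a (θ * ζ ω))
  have hG : Integrable G μ :=
    (integrable_prod_mul_truncWeight_mul_truncation (hζ.const_mul θ) hZm hZ0 hZC).integral_prod_left
  have hZint : Integrable Z μ := .of_bound hZm.aestronglyMeasurable C
    (ae_of_all _ fun ω => by rw [norm_of_nonneg (hZ0 ω)]; exact hZC ω)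
  have hpoint : ∀ ω, Z ω * exp (θ * ζ ω - (θ * ζ ω) ^ 2 / 2) ≤ Z ω + G ω := fun ω => by
    have := mul_le_mul_of_nonneg_left (exp_sub_sq_half_le_one_add_integral (θ * ζ ω)) (hZ0 ω)
    rwa [intervalIntegral.integral_of_le zero_le_one, mul_one_add, ← integral_const_mul] at this
  have hint : Integrable (fun ω => Z ω * exp (θ * ζ ω - (θ * ζ ω) ^ 2 / 2)) μ :=
    (hZint.add hG).mono' (by fun_prop) (ae_of_all _ fun ω => by
      rw [norm_of_nonneg (mul_nonneg (hZ0 ω) (exp_pos _).le)]; exact hpoint ω)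
  calc ∫ ω, Z ω * exp (θ * ζ ω - (θ * ζ ω) ^ 2 / 2) ∂μ ≤ ∫ ω, Z ω + G ω ∂μ :=
        integral_mono hint (hZint.add hG) hpoint
    _ = (∫ ω, Z ω ∂μ) + ∫ ω, G ω ∂μ := integral_add hZint hG
    _ ≤ ∫ ω, Z ω ∂μ := by
        linarith [integral_integral_mul_truncation_nonpos hm hζ hheavy hZ hZ0 hZC hθ]

end OneStep

section Supermartingale

variable {Ω : Type*} {m : MeasurableSpace Ω} {μ : Measure Ω} [IsProbabilityMeasure μ]
  {𝔉 : ℕ → MeasurableSpace Ω} {ξ : ℕ → Ω → ℝ} {θ : ℝ}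

lemma integral_prod_exp_le_one (hle : ∀ i, 𝔉 i ≤ m) (hmono : Monotone 𝔉)
    (hadp : ∀ i, StronglyMeasurable[𝔉 i] (ξ i))
    (hheavy : ∀ i, 1 ≤ i → ∀ a : ℝ, 0 < a → μ[fun ω => truncation a (ξ i ω) | 𝔉 (i - 1)] ≤ᵐ[μ] 0)
    (hθ : 0 < θ) (n : ℕ) :
    ∫ ω, ∏ i ∈ Icc 1 n, exp (θ * ξ i ω - (θ * ξ i ω) ^ 2 / 2) ∂μ ≤ 1 := by
  induction n with
  | zero => simp
  | succ n ih =>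
    set Z : Ω → ℝ := fun ω => ∏ i ∈ Icc 1 n, exp (θ * ξ i ω - (θ * ξ i ω) ^ 2 / 2)
    have hZ : StronglyMeasurable[𝔉 n] Z := by
      refine (Finset.measurable_prod _ fun i hi => ?_).stronglyMeasurable
      exact (by fun_prop : Measurable fun y : ℝ => exp (θ * y - (θ * y) ^ 2 / 2)).comp
        ((hadp i).mono (hmono (mem_Icc.1 hi).2)).measurable
    have hZC : ∀ ω, Z ω ≤ exp (1 / 2) ^ #(Icc 1 n) := fun ω => prod_exp_sub_sq_half_le _ _
    calc ∫ ω, ∏ i ∈ Icc 1 (n + 1), exp (θ * ξ i ω - (θ * ξ i ω) ^ 2 / 2) ∂μ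
        = ∫ ω, Z ω * exp (θ * ξ (n + 1) ω - (θ * ξ (n + 1) ω) ^ 2 / 2) ∂μ := by
          simp_rw [prod_Icc_succ_top (Nat.le_add_left 1 n), Z]
      _ ≤ ∫ ω, Z ω ∂μ := integral_mul_exp_le_integral (hle n)
          ((hadp _).mono (hle _)).measurable (hheavy (n + 1) (Nat.le_add_left 1 n)) hZ
          (fun ω => prod_nonneg fun i _ => (exp_pos _).le) hZC hθ
      _ ≤ 1 := ih

lemma measureReal_le_exp_neg (hle : ∀ i, 𝔉 i ≤ m) (hmono : Monotone 𝔉)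
    (hadp : ∀ i, StronglyMeasurable[𝔉 i] (ξ i))
    (hheavy : ∀ i, 1 ≤ i → ∀ a : ℝ, 0 < a → μ[fun ω => truncation a (ξ i ω) | 𝔉 (i - 1)] ≤ᵐ[μ] 0)
    (hθ : 0 < θ) (n : ℕ) (c : ℝ) :
    μ.real {ω | c ≤ θ * (∑ i ∈ Icc 1 n, ξ i ω) - θ ^ 2 * (∑ i ∈ Icc 1 n, ξ i ω ^ 2) / 2} ≤
      exp (-c) := by
  set W : Ω → ℝ := fun ω => ∏ i ∈ Icc 1 n, exp (θ * ξ i ω - (θ * ξ i ω) ^ 2 / 2)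
  have hW : ∀ ω,
      W ω = exp (θ * (∑ i ∈ Icc 1 n, ξ i ω) - θ ^ 2 * (∑ i ∈ Icc 1 n, ξ i ω ^ 2) / 2) := by
    intro ω
    simp only [W, ← exp_sum, sum_sub_distrib, mul_sum, sum_div, mul_pow, mul_div_assoc]
  have hWint : Integrable W μ := by
    refine .of_bound (Finset.measurable_prod _ fun i _ => ?_).aestronglyMeasurable
      (exp (1 / 2) ^ #(Icc 1 n)) (ae_of_all _ fun ω => ?_)
    · exact (by fun_prop : Measurable fun y : ℝ => exp (θ * y - (θ * y) ^ 2 / 2)).comp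
        ((hadp i).mono (hle i)).measurable
    · rw [norm_of_nonneg (prod_nonneg fun i _ => (exp_pos _).le)]
      exact prod_exp_sub_sq_half_le _ _
  have hMarkov := mul_meas_ge_le_integral_of_nonneg (f := W)
    (ae_of_all _ fun ω => prod_nonneg fun i _ => (exp_pos _).le) hWint (exp c)
  simp only [hW, exp_le_exp] at hMarkov
  calc _ = exp (-c) * (exp c * μ.real {ω | c ≤ θ * (∑ i ∈ Icc 1 n, ξ i ω) -
        θ ^ 2 * (∑ i ∈ Icc 1 n, ξ i ω ^ 2) / 2}) := by
        rw [← mul_assoc, ← exp_add, neg_add_cancel, exp_zero, one_mul]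
    _ ≤ exp (-c) * 1 := by
        gcongr
        exact hMarkov.trans ((integral_congr_ae (ae_of_all _ fun ω => (hW ω).symm)).trans_le
          (integral_prod_exp_le_one hle hmono hadp hheavy hθ n))
    _ = exp (-c) := mul_one _

end Supermartingale

lemma exists_lt_pow_le_le_pow_succ {δ t : ℝ} {K : ℕ} (hδ : 1 < δ) (ht : 1 ≤ t) (htK : t ≤ δ ^ K)
    (hK : 0 < K) : ∃ k < K, δ ^ k ≤ t ∧ t ≤ δ ^ (k + 1) := by
  obtain ⟨k, hk, hk'⟩ := exists_nat_pow_near ht hδ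
  by_cases hkK : k < K
  · exact ⟨k, hkK, hk, hk'.le⟩
  · refine ⟨K - 1, by omega, ?_, by rwa [Nat.sub_add_cancel hK]⟩
    calc δ ^ (K - 1) ≤ δ ^ k := pow_le_pow_right₀ hδ.le (by omega)
      _ ≤ t := hk

lemma le_one_add_inv_pow_floor_add_one {x M : ℝ} (hx : 0 < x) (hM : 1 ≤ M) :
    M ≤ (1 + 1 / x) ^ (⌊(1 + x) * log M⌋₊ + 1) := by
  have hδ : 0 < 1 + 1 / x := by positivity
  have hlogδ : 1 / (1 + x) ≤ log (1 + 1 / x) := by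
    convert one_sub_inv_le_log_of_pos hδ using 1
    field_simp
    ring
  rw [← log_le_log_iff (by linarith) (pow_pos hδ _), log_pow]
  calc log M = (1 + x) * log M * (1 / (1 + x)) := by field_simp
    _ ≤ ((⌊(1 + x) * log M⌋₊ + 1 : ℕ) : ℝ) * log (1 + 1 / x) := by
        gcongr
        exact_mod_cast (Nat.lt_floor_add_one _).le

lemma sq_half_sub_half_le {x ρ r s : ℝ} (hx : 0 < x) (hρ : 0 < ρ) (hρr : ρ ≤ (1 + 1 / x) * r)
    (hrρ : r ≤ ρ) (hs : x * r ≤ s) : x ^ 2 / 2 - 1 / 2 ≤ x / ρ * s - (x / ρ) ^ 2 * r ^ 2 / 2 := by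
  set τ := r / ρ with hτ
  have hτ1 : τ ≤ 1 := (div_le_one hρ).2 hrρ
  have hxτ : x * (1 - τ) ≤ 1 := by
    have hxρ : x * ρ ≤ x * r + r := by
      calc x * ρ ≤ x * ((1 + 1 / x) * r) := by gcongr
        _ = x * r + r := by field_simp
    calc x * (1 - τ) = (x * ρ - x * r) / ρ := by rw [hτ]; field_simp
      _ ≤ 1 := (div_le_one hρ).2 (by linarith)
  have hθs : x ^ 2 * τ ≤ x / ρ * s := by
    calc x ^ 2 * τ = x / ρ * (x * r) := by rw [hτ]; ring
      _ ≤ x / ρ * s := by gcongr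
  have hsq : (x / ρ) ^ 2 * r ^ 2 = x ^ 2 * τ ^ 2 := by rw [hτ]; ring
  nlinarith [mul_nonneg hx.le (sub_nonneg.2 hτ1)]

lemma exists_finset_peeling {x b M : ℝ} (hx : 0 < x) (hb : 0 < b) (hM : 1 ≤ M) :
    ∃ Θ : Finset ℝ, (∀ θ ∈ Θ, 0 < θ) ∧ (#Θ : ℝ) ≤ 1 + (1 + x) * log M ∧
      ∀ r s, x * r ≤ s → b ≤ r → r ≤ b * M →
        ∃ θ ∈ Θ, x ^ 2 / 2 - 1 / 2 ≤ θ * s - θ ^ 2 * r ^ 2 / 2 := by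
  set δ := 1 + 1 / x with hδ
  set K := ⌊(1 + x) * log M⌋₊ + 1
  have hδ1 : 1 < δ := lt_add_of_pos_right 1 (by positivity)
  refine ⟨(range K).image fun k => x / (b * δ ^ (k + 1)), ?_, ?_, ?_⟩
  · simp only [mem_image]
    rintro _ ⟨k, -, rfl⟩
    positivity
  · calc (#_ : ℝ) ≤ K := by exact_mod_cast card_image_le.trans (card_range K).le
      _ ≤ 1 + (1 + x) * log M := by
          have := Nat.floor_le (mul_nonneg (by positivity : (0 : ℝ) ≤ 1 + x) (log_nonneg hM))
          push_cast [K]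
          linarith
  · intro r s hs hbr hrM
    obtain ⟨k, hk, hlow, hup⟩ := exists_lt_pow_le_le_pow_succ hδ1 ((one_le_div hb).2 hbr)
      ((div_le_iff₀' hb).2 (hrM.trans (mul_le_mul_of_nonneg_left
        (le_one_add_inv_pow_floor_add_one hx hM) hb.le))) (Nat.succ_pos _)
    rw [le_div_iff₀' hb] at hlow
    rw [div_le_iff₀' hb] at hup
    refine ⟨_, mem_image_of_mem _ (mem_range.2 hk),
      sq_half_sub_half_le hx (by positivity) ?_ hup hs⟩
    calc b * δ ^ (k + 1) = δ * (b * δ ^ k) := by ring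
      _ ≤ δ * r := by gcongr

theorem stmt_12_general {Ω : Type*} {m : MeasurableSpace Ω} {μ : Measure Ω} [IsProbabilityMeasure μ]
    (𝔉 : ℕ → MeasurableSpace Ω) (hle : ∀ i, 𝔉 i ≤ m) (hmono : Monotone 𝔉)
    (ξ : ℕ → Ω → ℝ)
    (hadp : ∀ i, StronglyMeasurable[𝔉 i] (ξ i))
    (hheavy : ∀ i : ℕ, 1 ≤ i → ∀ a : ℝ, 0 < a →
      (μ[fun ω => min |ξ i ω| a * Real.sign (ξ i ω) | 𝔉 (i - 1)]) ≤ᵐ[μ] (fun _ => (0 : ℝ)))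
    (n : ℕ) (x b M : ℝ) (hx : 0 < x) (hb : 0 < b) (hM : 1 ≤ M)
    (S Q : Ω → ℝ)
    (hS : S = fun ω => ∑ i ∈ Finset.Icc 1 n, ξ i ω)
    (hQ : Q = fun ω => ∑ i ∈ Finset.Icc 1 n, (ξ i ω) ^ 2) :
    (μ {ω | x * Real.sqrt (Q ω) ≤ S ω ∧ b ≤ Real.sqrt (Q ω) ∧ Real.sqrt (Q ω) ≤ b * M}).toReal ≤
      Real.sqrt (Real.exp 1) * (1 + 2 * (1 + x) * Real.log M) * Real.exp (-x ^ 2 / 2) := by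
  obtain ⟨Θ, hΘpos, hΘcard, hpeel⟩ := exists_finset_peeling hx hb hM
  have hcover : {ω | x * √(Q ω) ≤ S ω ∧ b ≤ √(Q ω) ∧ √(Q ω) ≤ b * M} ⊆
      ⋃ θ ∈ Θ, {ω | x ^ 2 / 2 - 1 / 2 ≤ θ * S ω - θ ^ 2 * Q ω / 2} := by
    rintro ω ⟨hs, hbq, hqM⟩
    obtain ⟨θ, hθ, hc⟩ := hpeel _ _ hs hbq hqM
    rw [sq_sqrt (by rw [hQ]; positivity)] at hc
    exact Set.mem_biUnion hθ hc
  calc μ.real _ ≤ ∑ θ ∈ Θ, exp (-(x ^ 2 / 2 - 1 / 2)) :=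
        (measureReal_mono hcover (measure_ne_top _ _)).trans <|
        (measureReal_biUnion_finset_le _ _).trans <| sum_le_sum fun θ hθ => by
          subst hS hQ
          exact measureReal_le_exp_neg hle hmono hadp hheavy (hΘpos θ hθ) n _
    _ = #Θ * (exp (1 / 2) * exp (-x ^ 2 / 2)) := by
        rw [sum_const, nsmul_eq_mul, ← exp_add]; ring_nf
    _ ≤ (1 + 2 * (1 + x) * log M) * (exp (1 / 2) * exp (-x ^ 2 / 2)) := by
        gcongr
        linarith [mul_nonneg (by positivity : (0 : ℝ) ≤ 1 + x) (log_nonneg hM)]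
    _ = √(exp 1) * (1 + 2 * (1 + x) * log M) * exp (-x ^ 2 / 2) := by
        rw [sqrt_eq_rpow, exp_one_rpow, one_div]; ring

theorem stmt_12 {Ω : Type*} {m : MeasurableSpace Ω} {μ : Measure Ω} [IsProbabilityMeasure μ]
    (𝔉 : ℕ → MeasurableSpace Ω) (hle : ∀ i, 𝔉 i ≤ m) (hmono : Monotone 𝔉)
    (ξ : ℕ → Ω → ℝ)
    (hadp : ∀ i, StronglyMeasurable[𝔉 i] (ξ i))
    (hsq : ∀ i, Integrable (fun ω => (ξ i ω) ^ 2) μ)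
    (hmart : ∀ i : ℕ, 1 ≤ i → μ[ξ i | 𝔉 (i - 1)] =ᵐ[μ] 0)
    (hheavy : ∀ i : ℕ, 1 ≤ i → ∀ a : ℝ, 0 < a →
      (μ[fun ω => min |ξ i ω| a * Real.sign (ξ i ω) | 𝔉 (i - 1)]) ≤ᵐ[μ] (fun _ => (0 : ℝ)))
    (n : ℕ) (x b M : ℝ) (hx : 0 < x) (hb : 0 < b) (hM : 1 ≤ M)
    (S Q : Ω → ℝ)
    (hS : S = fun ω => ∑ i ∈ Finset.Icc 1 n, ξ i ω)
    (hQ : Q = fun ω => ∑ i ∈ Finset.Icc 1 n, (ξ i ω) ^ 2) :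
    (μ {ω | x * Real.sqrt (Q ω) ≤ S ω ∧ b ≤ Real.sqrt (Q ω) ∧ Real.sqrt (Q ω) ≤ b * M}).toReal ≤
      Real.sqrt (Real.exp 1) * (1 + 2 * (1 + x) * Real.log M) * Real.exp (-x ^ 2 / 2) :=
  stmt_12_general 𝔉 hle hmono ξ hadp hheavy n x b M hx hb hM S Q hS hQ
end
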